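/- arXiv:1712.02484 — 6 statements merged into one kernel-verified Lean document; each statement's English description precedes it below -/
import Mathlib

section
/- If an element w of a group G satisfies |wᵏ| = k·|w| for all k ≥ 0 (the powers of w form a geodesic), then κ(w) ≤ 0. -/
open Filter Topology

section WL
variable {G : Type*} [Group G]

/-- Word length of `g` with respect to a generating set `S`. -/
noncomputable def wl (S : Set G) (g : G) : ℕ :=
  sInf {n | ∃ l : List G, (∀ x ∈ l, x ∈ S) ∧ l.length = n ∧ l.prod = g}

/-- Average word length of conjugates of `g` by elements of `S`. -/
noncomputable def Av (S : Finset G) (g : G) : ℝ :=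
  (∑ a ∈ S, (wl (S : Set G) (a⁻¹ * g * a) : ℝ)) / S.card

/-- Medium-scale Ricci curvature `κ(g) = (|g| - Av(g))/|g|`. -/
noncomputable def curv (S : Finset G) (g : G) : ℝ :=
  ((wl (S : Set G) g : ℝ) - Av S g) / (wl (S : Set G) g)

lemma wl_le_length {S : Set G} (l : List G) (h : ∀ x ∈ l, x ∈ S) :
    wl S l.prod ≤ l.length :=
  Nat.sInf_le ⟨l, h, rfl, rfl⟩

lemma exists_word {S : Set G} (hgen : Subgroup.closure S = ⊤)
    (hsym : ∀ a ∈ S, a⁻¹ ∈ S) (g : G) :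
    ∃ l : List G, (∀ x ∈ l, x ∈ S) ∧ l.prod = g := by
  have hg : g ∈ (Subgroup.closure S).toSubmonoid := by
    rw [hgen]; trivial
  rw [Subgroup.closure_toSubmonoid] at hg
  obtain ⟨l, hl, hprod⟩ := Submonoid.exists_list_of_mem_closure hg
  refine ⟨l, fun x hx => ?_, hprod⟩
  rcases hl x hx with h | h
  · exact h
  · simpa using hsym _ h

lemma wl_spec {S : Set G} (hgen : Subgroup.closure S = ⊤)
    (hsym : ∀ a ∈ S, a⁻¹ ∈ S) (g : G) :
    ∃ l : List G, (∀ x ∈ l, x ∈ S) ∧ l.length = wl S g ∧ l.prod = g := by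
  obtain ⟨l, hl, hprod⟩ := exists_word hgen hsym g
  have : wl S g ∈ {n | ∃ l : List G, (∀ x ∈ l, x ∈ S) ∧ l.length = n ∧ l.prod = g} :=
    Nat.sInf_mem ⟨l.length, l, hl, rfl, hprod⟩
  exact this

lemma wl_mul_le {S : Set G} (hgen : Subgroup.closure S = ⊤)
    (hsym : ∀ a ∈ S, a⁻¹ ∈ S) (g h : G) :
    wl S (g * h) ≤ wl S g + wl S h := by
  obtain ⟨l1, h1, hlen1, hp1⟩ := wl_spec hgen hsym g
  obtain ⟨l2, h2, hlen2, hp2⟩ := wl_spec hgen hsym h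
  have := wl_le_length (S := S) (l1 ++ l2) (by
    intro x hx; rcases List.mem_append.1 hx with hx | hx
    · exact h1 x hx
    · exact h2 x hx)
  simpa [hp1, hp2, hlen1, hlen2] using this

lemma wl_pow_le {S : Set G} (hgen : Subgroup.closure S = ⊤)
    (hsym : ∀ a ∈ S, a⁻¹ ∈ S) (g : G) (k : ℕ) :
    wl S (g ^ k) ≤ k * wl S g := by
  induction k with
  | zero => simp [show wl S 1 = 0 from Nat.le_zero.1 (by simpa using wl_le_length (S := S) [] (by simp))]
  | succ n ih =>
    calc wl S (g ^ (n + 1)) = wl S (g ^ n * g) := by rw [pow_succ]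
      _ ≤ wl S (g ^ n) + wl S g := wl_mul_le hgen hsym _ _
      _ ≤ n * wl S g + wl S g := by gcongr
      _ = (n + 1) * wl S g := by ring

lemma wl_mem_le_one {S : Set G} {a : G} (ha : a ∈ S) : wl S a ≤ 1 := by
  simpa using wl_le_length (S := S) [a] (by simpa using ha)

lemma wl_pos' {S : Set G} (hgen : Subgroup.closure S = ⊤)
    (hsym : ∀ a ∈ S, a⁻¹ ∈ S) {g : G} (hg : g ≠ 1) : 0 < wl S g := by
  rcases Nat.eq_zero_or_pos (wl S g) with h | h
  · obtain ⟨l, -, hlen, hprod⟩ := wl_spec hgen hsym g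
    rw [h] at hlen
    rw [List.length_eq_zero_iff.1 hlen] at hprod
    exact absurd (by simpa using hprod.symm) hg
  · exact h

end WL

theorem stmt2 {G : Type*} [Group G] (S : Finset G)
    (hgen : Subgroup.closure (S : Set G) = ⊤)
    (hsym : ∀ a ∈ S, a⁻¹ ∈ S) (hid : (1 : G) ∉ S) (hne : S.Nonempty)
    (w : G) (hw : w ≠ 1)
    (hgeo : ∀ k : ℕ, wl (S : Set G) (w ^ k) = k * wl (S : Set G) w) :
    curv S w ≤ 0 := by
  have hSsym : ∀ a ∈ (S : Set G), a⁻¹ ∈ (S : Set G) := by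
    intro a ha; exact_mod_cast hsym a (by exact_mod_cast ha)
  have hwpos : 0 < wl (S : Set G) w := wl_pos' hgen hSsym hw
  -- key: every conjugate has length ≥ |w|
  have key : ∀ a ∈ S, (wl (S : Set G) w : ℝ) ≤ wl (S : Set G) (a⁻¹ * w * a) := by
    intro a ha
    by_contra hlt
    push_neg at hlt
    have hlt' : wl (S : Set G) (a⁻¹ * w * a) < wl (S : Set G) w := by exact_mod_cast hlt
    set c := a⁻¹ * w * a with hc
    have hconj : ∀ k : ℕ, w ^ k = a * c ^ k * a⁻¹ := by
      intro k
      rw [hc]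
      rw [show a⁻¹ * w * a = a⁻¹ * w * a from rfl]
      have : (a⁻¹ * w * a) ^ k = a⁻¹ * w ^ k * a := by
        induction k with
        | zero => simp
        | succ n ih => rw [pow_succ, pow_succ, ih]; group
      rw [this]; group
    have h3 : wl (S : Set G) (w ^ 3) ≤ 1 + 3 * wl (S : Set G) c + 1 := by
      rw [hconj 3]
      calc wl (S : Set G) (a * c ^ 3 * a⁻¹)
          ≤ wl (S : Set G) (a * c ^ 3) + wl (S : Set G) a⁻¹ := wl_mul_le hgen hSsym _ _
        _ ≤ wl (S : Set G) a + wl (S : Set G) (c ^ 3) + wl (S : Set G) a⁻¹ := by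
            gcongr; exact wl_mul_le hgen hSsym _ _
        _ ≤ 1 + 3 * wl (S : Set G) c + 1 := by
            gcongr
            · exact wl_mem_le_one (by exact_mod_cast ha)
            · exact wl_pow_le hgen hSsym _ _
            · exact wl_mem_le_one (by exact_mod_cast hsym a ha)
    rw [hgeo 3] at h3
    omega
  -- hence Av S w ≥ |w|
  have hAv : (wl (S : Set G) w : ℝ) ≤ Av S w := by
    rw [Av, le_div_iff₀ (by exact_mod_cast Finset.card_pos.2 hne)]
    calc (wl (S : Set G) w : ℝ) * S.card = ∑ _a ∈ S, (wl (S : Set G) w : ℝ) := by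
          rw [Finset.sum_const, nsmul_eq_mul, mul_comm]
      _ ≤ ∑ a ∈ S, (wl (S : Set G) (a⁻¹ * w * a) : ℝ) := Finset.sum_le_sum key
  rw [curv]
  apply div_nonpos_of_nonpos_of_nonneg
  · linarith
  · positivity
end

section
/- In the symmetric group Sym(n) with generating set S = Sym(n) \ {e, σ, σ⁻¹} where σ = (1 2 … n) is the n-cycle and n ≥ 5: |σ| = 2 and Av(σ) = (n! + 2n - 6)/(n! - 3). In particular Av(σ) → 1 as n → ∞ and κ(σ) = (2 - Av(σ))/2 → 1/2. -/
open Filter Topology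

/-- The generating set `Sym(n) \ {e, σ, σ⁻¹}` where `σ` is the `n`-cycle. -/
noncomputable def Spos (n : ℕ) : Finset (Equiv.Perm (Fin n)) :=
  Finset.univ \ {1, finRotate n, (finRotate n)⁻¹}

/-! A conjugate `a⁻¹σa ≠ 1` other than `σ^{±1}` lies in `S = Sym(n) \ {1, σ, σ⁻¹}` and has
length `1`, while `σ^{±1} ∉ S` have length `2`: `σ = x * (x⁻¹ * σ)` with both factors in `S` for
any `x ∉ {1, σ, σ⁻¹, σ²}`. Summing over `a ∈ S`, the total length is `|S|` plus the number of
`a ∈ S` conjugating `σ` to `σ` or to `σ⁻¹`. The first set is the centralizer `⟨σ⟩`, of order `n`,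
minus `1, σ, σ⁻¹`; the second is a coset of the centralizer (`σ` and `σ⁻¹` have the same cycle
type) and lies entirely in `S`. This gives `Av(σ) = ((n! - 3) + (n - 3) + n) / (n! - 3)`, which
tends to `1` since `n! ≫ n`. -/

open Finset

section WordLength
variable {G : Type*} [Group G] {S : Set G} {g : G}

lemma wl_eq_one_of_mem (hgS : g ∈ S) (hg1 : g ≠ 1) : wl S g = 1 := by
  refine le_antisymm (Nat.sInf_le ⟨[g], by simp [hgS]⟩) (le_csInf ⟨1, [g], by simp [hgS]⟩ ?_)
  rintro _ ⟨_ | ⟨x, l⟩, -, rfl, hl⟩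
  · exact absurd hl.symm hg1
  · simp

lemma wl_eq_two_of_mul_eq (hgS : g ∉ S) (hg1 : g ≠ 1) {x y : G} (hx : x ∈ S) (hy : y ∈ S)
    (hxy : x * y = g) : wl S g = 2 := by
  have hword : ∃ l : List G, (∀ z ∈ l, z ∈ S) ∧ l.length = 2 ∧ l.prod = g :=
    ⟨[x, y], by simp [hx, hy, hxy]⟩
  refine le_antisymm (Nat.sInf_le hword) (le_csInf ⟨2, hword⟩ ?_)
  rintro _ ⟨_ | ⟨z, _ | ⟨w, l⟩⟩, hl, rfl, hprod⟩
  · exact absurd hprod.symm hg1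
  · simp only [List.prod_cons, List.prod_nil, mul_one] at hprod
    exact absurd (hprod ▸ hl z (by simp)) hgS
  · simp

end WordLength

lemma ne_one_of_ne_inv {G : Type*} [Group G] {g : G} (hg : g ≠ g⁻¹) : g ≠ 1 := by
  rintro rfl
  simp at hg

section Conjugators
variable {G : Type*} [Group G] [Fintype G] [DecidableEq G] {g : G}

lemma card_filter_conj_eq_of_isConj {k : G} (hk : IsConj g k) :
    #{a | a⁻¹ * g * a = k} = #{a : G | a⁻¹ * g * a = g} := by
  obtain ⟨c, rfl⟩ := isConj_iff.mp hk
  refine card_nbij' (· * c) (· * c⁻¹) ?_ ?_ (fun a _ => by simp) (fun a _ => by simp)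
  · intro a ha
    simp only [coe_filter, mem_univ, true_and, Set.mem_ofPred_eq] at ha ⊢
    calc (a * c)⁻¹ * g * (a * c) = c⁻¹ * (a⁻¹ * g * a) * c := by group
      _ = g := by rw [ha]; group
  · intro a ha
    simp only [coe_filter, mem_univ, true_and, Set.mem_ofPred_eq] at ha ⊢
    calc (a * c⁻¹)⁻¹ * g * (a * c⁻¹) = c * (a⁻¹ * g * a) * c⁻¹ := by group
      _ = c * g * c⁻¹ := by rw [ha]

lemma card_filter_conj_eq_self :
    #{a : G | a⁻¹ * g * a = g} = Nat.card (Subgroup.centralizer {g}) := by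
  rw [← Fintype.card_coe, ← Nat.card_eq_fintype_card]
  refine Nat.card_congr (Equiv.subtypeEquivRight fun a => ?_)
  rw [mem_filter, Subgroup.mem_centralizer_singleton_iff, mul_assoc, inv_mul_eq_iff_eq_mul]
  simp [eq_comm]

end Conjugators

section Complement
variable {G : Type*} [Group G] [DecidableEq G] {g h : G}

lemma card_one_self_inv (hg : g ≠ g⁻¹) : #({1, g, g⁻¹} : Finset G) = 3 := by
  have hg1 := ne_one_of_ne_inv hg
  rw [card_insert_of_notMem (by simp [hg1.symm, inv_ne_one.mpr hg1 |>.symm]),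
    card_pair hg]

variable [Fintype G]

def univSdiffOneSelfInv (g : G) : Finset G := univ \ {1, g, g⁻¹}

lemma mem_univSdiffOneSelfInv : h ∈ univSdiffOneSelfInv g ↔ h ≠ 1 ∧ h ≠ g ∧ h ≠ g⁻¹ := by
  simp [univSdiffOneSelfInv]

lemma univSdiffOneSelfInv_inv : univSdiffOneSelfInv g⁻¹ = univSdiffOneSelfInv g := by
  ext h
  simp only [mem_univSdiffOneSelfInv, inv_inv]
  tauto

lemma card_univSdiffOneSelfInv_add_three (hg : g ≠ g⁻¹) :
    #(univSdiffOneSelfInv g) + 3 = Fintype.card G := by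
  rw [univSdiffOneSelfInv, ← card_one_self_inv hg, card_sdiff_add_card_eq_card (subset_univ _),
    card_univ]

lemma wl_univSdiffOneSelfInv_self (hG : 5 ≤ Fintype.card G) (hg : g ≠ g⁻¹) :
    wl (univSdiffOneSelfInv g : Set G) g = 2 := by
  obtain ⟨x, -, hx⟩ := exists_mem_notMem_of_card_lt_card
    (s := ({1, g, g⁻¹, g * g} : Finset G)) (t := univ) (by
      rw [card_univ]
      exact (card_le_four).trans_lt (by omega))
  simp only [mem_insert, mem_singleton, not_or] at hx
  obtain ⟨hx1, hxg, hxg', hxgg⟩ := hx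
  refine wl_eq_two_of_mul_eq (by simp [mem_univSdiffOneSelfInv]) (ne_one_of_ne_inv hg)
    (x := x) (y := x⁻¹ * g) ?_ ?_ (mul_inv_cancel_left x g)
  · exact mem_univSdiffOneSelfInv.mpr ⟨hx1, hxg, hxg'⟩
  · refine mem_univSdiffOneSelfInv.mpr ⟨?_, ?_, ?_⟩
    · exact fun he => hxg (inv_mul_eq_one.mp he)
    · exact fun he => hx1 (by simpa using he)
    · exact fun he => hxgg (eq_mul_inv_iff_mul_eq.mp (inv_mul_eq_iff_eq_mul.mp he)).symm

lemma wl_univSdiffOneSelfInv (hG : 5 ≤ Fintype.card G) (hg : g ≠ g⁻¹) (hh : h ≠ 1) :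
    wl (univSdiffOneSelfInv g : Set G) h =
      1 + (if h = g then 1 else 0) + (if h = g⁻¹ then 1 else 0) := by
  by_cases hhg : h = g
  · subst hhg
    simp [wl_univSdiffOneSelfInv_self hG hg, hg]
  by_cases hhg' : h = g⁻¹
  · subst hhg'
    rw [← univSdiffOneSelfInv_inv, wl_univSdiffOneSelfInv_self hG (by simpa using hg.symm)]
    simp [hhg]
  · simp only [hhg, hhg', if_false]
    exact wl_eq_one_of_mem (mem_univSdiffOneSelfInv.mpr ⟨hh, hhg, hhg'⟩) hh

lemma filter_univSdiffOneSelfInv (p : G → Prop) [DecidablePred p] :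
    (univSdiffOneSelfInv g).filter p = ({a | p a} : Finset G) \ {1, g, g⁻¹} := by
  ext a
  simp [univSdiffOneSelfInv, and_comm]

lemma card_filter_univSdiffOneSelfInv_conj_eq_self_add_three (hg : g ≠ g⁻¹) :
    #{a ∈ univSdiffOneSelfInv g | a⁻¹ * g * a = g} + 3 = #{a : G | a⁻¹ * g * a = g} := by
  rw [filter_univSdiffOneSelfInv, ← card_one_self_inv hg, card_sdiff_add_card_eq_card]
  intro a ha
  simp only [mem_insert, mem_singleton] at ha
  rcases ha with rfl | rfl | rfl <;> simp

lemma card_filter_univSdiffOneSelfInv_conj_eq_inv (hg : g ≠ g⁻¹) :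
    #{a ∈ univSdiffOneSelfInv g | a⁻¹ * g * a = g⁻¹} = #{a : G | a⁻¹ * g * a = g⁻¹} := by
  rw [filter_univSdiffOneSelfInv, sdiff_eq_self_of_disjoint <| disjoint_right.mpr fun a ha => ?_]
  simp only [mem_insert, mem_singleton] at ha
  rcases ha with rfl | rfl | rfl <;> simpa using hg

lemma sum_wl_conj_univSdiffOneSelfInv (hG : 5 ≤ Fintype.card G) (hg : g ≠ g⁻¹) :
    ∑ a ∈ univSdiffOneSelfInv g, wl (univSdiffOneSelfInv g : Set G) (a⁻¹ * g * a) =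
      #(univSdiffOneSelfInv g) + #{a ∈ univSdiffOneSelfInv g | a⁻¹ * g * a = g} +
        #{a ∈ univSdiffOneSelfInv g | a⁻¹ * g * a = g⁻¹} := by
  rw [card_filter, card_filter, card_eq_sum_ones, ← sum_add_distrib, ← sum_add_distrib]
  refine sum_congr rfl fun a _ => wl_univSdiffOneSelfInv hG hg ?_
  rw [Ne, mul_assoc, inv_mul_eq_one, right_eq_mul]
  exact ne_one_of_ne_inv hg

end Complement

theorem av_univSdiffOneSelfInv {G : Type*} [Group G] [Fintype G] [DecidableEq G] {g : G}
    (hG : 5 ≤ Fintype.card G) (hg : g ≠ g⁻¹) (hconj : IsConj g g⁻¹) :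
    Av (univSdiffOneSelfInv g) g =
      ((Fintype.card G : ℝ) + 2 * Nat.card (Subgroup.centralizer {g}) - 6) /
        (Fintype.card G - 3) := by
  rw [Av, ← Nat.cast_sum, sum_wl_conj_univSdiffOneSelfInv hG hg,
    card_filter_univSdiffOneSelfInv_conj_eq_inv hg, card_filter_conj_eq_of_isConj hconj,
    ← card_filter_conj_eq_self, ← card_univSdiffOneSelfInv_add_three hg,
    ← card_filter_univSdiffOneSelfInv_conj_eq_self_add_three hg]
  push_cast
  ring

section Cycle
open Equiv

lemma Equiv.Perm.isConj_inv {α : Type*} [Fintype α] [DecidableEq α] (σ : Perm α) :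
    IsConj σ σ⁻¹ :=
  Perm.isConj_iff_cycleType_eq.mpr (Perm.cycleType_inv σ).symm

lemma nat_card_centralizer_finRotate {n : ℕ} (hn : 2 ≤ n) :
    Nat.card (Subgroup.centralizer {finRotate n}) = n := by
  simp [Perm.nat_card_centralizer, cycleType_finRotate_of_le hn]

lemma finRotate_ne_inv {n : ℕ} (hn : 3 ≤ n) : finRotate n ≠ (finRotate n)⁻¹ := by
  obtain ⟨k, rfl⟩ := Nat.exists_eq_add_of_le' hn
  intro h
  have h2 : (finRotate (k + 3) * finRotate (k + 3)) 0 = 0 := by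
    rw [mul_eq_one_iff_eq_inv.mpr h, Perm.one_apply]
  rw [Perm.mul_apply, finRotate_apply, finRotate_apply, Fin.ext_iff] at h2
  simp [Fin.val_add, Nat.mod_eq_of_lt (show 2 < k + 3 by omega)] at h2

lemma spos_eq_univSdiffOneSelfInv (n : ℕ) : Spos n = univSdiffOneSelfInv (finRotate n) := rfl

lemma five_le_card_perm_fin {n : ℕ} (hn : 3 ≤ n) : 5 ≤ Fintype.card (Perm (Fin n)) := by
  rw [Fintype.card_perm, Fintype.card_fin]
  exact (by decide : 5 ≤ Nat.factorial 3).trans (Nat.factorial_le hn)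

lemma wl_spos_finRotate {n : ℕ} (hn : 3 ≤ n) :
    wl (Spos n : Set (Perm (Fin n))) (finRotate n) = 2 :=
  wl_univSdiffOneSelfInv_self (five_le_card_perm_fin hn) (finRotate_ne_inv hn)

lemma av_spos_finRotate {n : ℕ} (hn : 3 ≤ n) :
    Av (Spos n) (finRotate n) = ((n.factorial : ℝ) + 2 * n - 6) / ((n.factorial : ℝ) - 3) := by
  rw [spos_eq_univSdiffOneSelfInv,
    av_univSdiffOneSelfInv (five_le_card_perm_fin hn) (finRotate_ne_inv hn) (Perm.isConj_inv _),
    nat_card_centralizer_finRotate (by omega), Fintype.card_perm, Fintype.card_fin]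

end Cycle

lemma sq_add_three_le_factorial {n : ℕ} (hn : 4 ≤ n) : n ^ 2 + 3 ≤ n.factorial := by
  obtain ⟨k, rfl⟩ := Nat.exists_eq_add_of_le' hn
  rw [Nat.factorial_succ, Nat.factorial_succ]
  have hf : 2 ≤ (k + 2).factorial := (by omega : 2 ≤ k + 2).trans (Nat.self_le_factorial _)
  calc (k + 4) ^ 2 + 3 ≤ (k + 3 + 1) * ((k + 2 + 1) * 2) := by ring_nf; omega
    _ ≤ (k + 3 + 1) * ((k + 2 + 1) * (k + 2).factorial) := by gcongr

lemma tendsto_factorial_add_div_factorial_sub :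
    Tendsto (fun n : ℕ => ((n.factorial : ℝ) + 2 * n - 6) / (n.factorial - 3)) atTop (𝓝 1) := by
  have hbound : ∀ᶠ n : ℕ in atTop, (4 : ℝ) ≤ n ∧ (n : ℝ) ^ 2 + 3 ≤ n.factorial := by
    filter_upwards [eventually_ge_atTop 4] with n hn
    exact ⟨by exact_mod_cast hn, by exact_mod_cast sq_add_three_le_factorial hn⟩
  have hsmall : Tendsto (fun n : ℕ => (2 * n - 3 : ℝ) / (n.factorial - 3)) atTop (𝓝 0) := by
    refine squeeze_zero' ?_ ?_ (tendsto_const_div_atTop_nhds_zero_nat 2)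
    · filter_upwards [hbound] with n ⟨hn, hfac⟩
      exact div_nonneg (by linarith) (by nlinarith)
    · filter_upwards [hbound] with n ⟨hn, hfac⟩
      rw [div_le_div_iff₀ (by nlinarith) (by linarith)]
      nlinarith
  have hone : Tendsto (fun n : ℕ => 1 + (2 * n - 3 : ℝ) / (n.factorial - 3)) atTop (𝓝 1) := by
    simpa using hsmall.const_add 1
  refine hone.congr' ?_
  filter_upwards [hbound] with n ⟨hn, hfac⟩
  have hden : (n.factorial : ℝ) - 3 ≠ 0 := by nlinarith
  field_simp
  ring

theorem stmt5 :
    (∀ n : ℕ, 5 ≤ n →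
        wl ((Spos n : Finset (Equiv.Perm (Fin n))) : Set (Equiv.Perm (Fin n)))
            (finRotate n) = 2 ∧
          Av (Spos n) (finRotate n) =
            ((n.factorial : ℝ) + 2 * n - 6) / ((n.factorial : ℝ) - 3)) ∧
      Tendsto (fun n => Av (Spos n) (finRotate n)) atTop (nhds 1) ∧
      Tendsto (fun n => curv (Spos n) (finRotate n)) atTop (nhds (1 / 2)) := by
  have hAv : Tendsto (fun n => Av (Spos n) (finRotate n)) atTop (𝓝 1) :=
    tendsto_factorial_add_div_factorial_sub.congr' <| by
      filter_upwards [eventually_ge_atTop 3] with n hn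
      rw [av_spos_finRotate hn]
  refine ⟨fun n hn => ⟨wl_spos_finRotate (by omega), av_spos_finRotate (by omega)⟩, hAv, ?_⟩
  have hcurv : Tendsto (fun n => (2 - Av (Spos n) (finRotate n)) / 2) atTop (𝓝 (1 / 2)) := by
    convert (tendsto_const_nhds.sub hAv).div_const (2 : ℝ) using 2
    norm_num
  refine hcurv.congr' ?_
  filter_upwards [eventually_ge_atTop 3] with n hn
  rw [curv, wl_spos_finRotate hn]
  norm_num
end

section
/- In the free group F_n of rank n ≥ 2 with the standard symmetric generating set, every nontrivial element w of word length m satisfies Av(w) = m + 2 - 2/n, and hence κ(w) = (2 - 2n)/(mn) < 0. -/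
open Filter Topology

/-- The standard symmetric generating set of the free group `F_n`. -/
noncomputable def freeGens (n : ℕ) : Finset (FreeGroup (Fin n)) := by
  classical
  exact Finset.univ.image (fun i => FreeGroup.of i) ∪
    Finset.univ.image (fun i => (FreeGroup.of i)⁻¹)

/-!
Write `w` as a reduced word. Conjugating by a letter `p` puts `p⁻¹` in front of it and `p` behind
it; the front pair cancels exactly when `w` begins with `p`, the back pair exactly when `w` ends
with `p⁻¹`, and nothing else cancels since `w` is reduced. Hence
`|p⁻¹ w p| = |w| + 2 - 2 [w begins with p] - 2 [w ends with p⁻¹]`, whether or not `w` is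
cyclically reduced. Summed over the `2n` letters, each indicator is `1` for exactly one letter,
so the conjugates have total length `2n (|w| + 2) - 4`.
-/

namespace FreeGroup

variable {α : Type*}

def invLetter (p : α × Bool) : α × Bool := (p.1, !p.2)

@[simp]
lemma invLetter_invLetter (p : α × Bool) : invLetter (invLetter p) = p := by
  simp [invLetter]

lemma invLetter_ne_self (p : α × Bool) : invLetter p ≠ p := by
  simp [invLetter, Prod.ext_iff]

lemma mk_invLetter (p : α × Bool) : mk [invLetter p] = (mk [p])⁻¹ := by
  rw [inv_mk]; rfl

lemma ne_invLetter_iff {p q : α × Bool} : q ≠ invLetter p ↔ (p.1 = q.1 → p.2 = q.2) := by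
  obtain ⟨a, x⟩ := p; obtain ⟨b, y⟩ := q
  simp only [invLetter, ne_eq, Prod.mk.injEq, not_and]
  constructor
  · rintro h rfl; cases x <;> cases y <;> simp_all
  · rintro h rfl; cases x <;> simp_all

lemma ne_invLetter_comm {p q : α × Bool} : q ≠ invLetter p ↔ p ≠ invLetter q := by
  rw [ne_invLetter_iff, ne_invLetter_iff]
  exact ⟨fun h e => (h e.symm).symm, fun h e => (h e.symm).symm⟩

lemma isReduced_cons_iff {p : α × Bool} {L : List (α × Bool)} :
    IsReduced (p :: L) ↔ (∀ q ∈ L.head?, q ≠ invLetter p) ∧ IsReduced L := by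
  simp only [ne_invLetter_iff]; exact List.isChain_cons

lemma isReduced_append_singleton_iff {p : α × Bool} {L : List (α × Bool)} :
    IsReduced (L ++ [p]) ↔ IsReduced L ∧ ∀ q ∈ L.getLast?, q ≠ invLetter p := by
  simp only [ne_invLetter_comm (p := p), ne_invLetter_iff]
  simp [IsReduced, List.isChain_append]

lemma mk_cons (p : α × Bool) (L : List (α × Bool)) : mk (p :: L) = mk [p] * mk L :=
  (mul_mk (L₁ := [p])).symm

lemma conj_mk (p : α × Bool) (L : List (α × Bool)) :
    (mk [p])⁻¹ * mk L * mk [p] = mk (invLetter p :: L ++ [p]) := by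
  rw [← mk_invLetter, mul_mk, mul_mk]; rfl

lemma prod_map_mk_singleton (L : List (α × Bool)) : (L.map fun p => mk [p]).prod = mk L := by
  induction L with
  | nil => rfl
  | cons p L ih => rw [List.map_cons, List.prod_cons, ih, mk_cons p L]

variable [DecidableEq α]

lemma IsReduced.norm_mk {L : List (α × Bool)} (h : IsReduced L) : norm (mk L) = L.length := by
  rw [norm, toWord_mk, h.reduce_eq]

lemma norm_mk_singleton (p : α × Bool) : norm (mk [p]) = 1 :=
  IsReduced.singleton.norm_mk

lemma mk_singleton_injective : Function.Injective fun p : α × Bool => mk [p] := by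
  intro p q h
  simpa [toWord_mk, reduce_singleton] using congrArg toWord h

lemma norm_conj_of_cancel_both {p : α × Bool} {M : List (α × Bool)}
    (h : IsReduced (p :: M ++ [invLetter p])) :
    norm ((mk [p])⁻¹ * mk (p :: M ++ [invLetter p]) * mk [p]) = M.length := by
  have : (mk [p])⁻¹ * mk (p :: M ++ [invLetter p]) * mk [p] = mk M := by
    rw [List.cons_append, mk_cons p (M ++ _), ← mul_mk, mk_invLetter]; group
  rw [this, (h.infix ⟨[p], [invLetter p], rfl⟩).norm_mk]

lemma norm_conj_of_cancel_left {p : α × Bool} {T : List (α × Bool)} (h : IsReduced (p :: T))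
    (hT : ∀ q ∈ T.getLast?, q ≠ invLetter p) :
    norm ((mk [p])⁻¹ * mk (p :: T) * mk [p]) = T.length + 1 := by
  have : (mk [p])⁻¹ * mk (p :: T) * mk [p] = mk (T ++ [p]) := by
    rw [mk_cons p T, ← mul_mk]; group
  rw [this, (isReduced_append_singleton_iff.2 ⟨(isReduced_cons_iff.1 h).2, hT⟩).norm_mk,
    List.length_append, List.length_singleton]

lemma norm_conj_of_cancel_right {p : α × Bool} {I : List (α × Bool)}
    (h : IsReduced (I ++ [invLetter p])) (hI : ∀ q ∈ I.head?, q ≠ p) :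
    norm ((mk [p])⁻¹ * mk (I ++ [invLetter p]) * mk [p]) = I.length + 1 := by
  have : (mk [p])⁻¹ * mk (I ++ [invLetter p]) * mk [p] = mk (invLetter p :: I) := by
    rw [← mul_mk, mk_cons (invLetter p) I, mk_invLetter]; group
  have hred : IsReduced (invLetter p :: I) :=
    isReduced_cons_iff.2 ⟨by simpa using hI, (isReduced_append_singleton_iff.1 h).1⟩
  rw [this, hred.norm_mk, List.length_cons]

lemma norm_conj_of_no_cancel {p : α × Bool} {L : List (α × Bool)} (h : IsReduced L)
    (hL : L ≠ []) (hhead : ∀ q ∈ L.head?, q ≠ p) (hlast : ∀ q ∈ L.getLast?, q ≠ invLetter p) :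
    norm ((mk [p])⁻¹ * mk L * mk [p]) = L.length + 2 := by
  have hred : IsReduced (invLetter p :: L ++ [p]) := by
    refine isReduced_cons_iff.2 ⟨?_, isReduced_append_singleton_iff.2 ⟨h, hlast⟩⟩
    simpa [List.head?_append_of_ne_nil _ hL] using hhead
  rw [conj_mk, hred.norm_mk]
  simp

theorem norm_conj_mk_singleton (p : α × Bool) {g : FreeGroup α} (hg : g ≠ 1) :
    (norm ((mk [p])⁻¹ * g * mk [p]) : ℤ) = norm g + 2
      - (if g.toWord.head? = some p then 2 else 0)
      - (if g.toWord.getLast? = some (invLetter p) then 2 else 0) := by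
  obtain ⟨L, hL, rfl⟩ : ∃ L, IsReduced L ∧ mk L = g := ⟨g.toWord, isReduced_toWord, mk_toWord⟩
  have hL0 : L ≠ [] := by rintro rfl; exact hg rfl
  rw [toWord_mk, hL.reduce_eq, hL.norm_mk]
  by_cases hhead : L.head? = some p <;> by_cases hlast : L.getLast? = some (invLetter p)
  · obtain ⟨I, rfl⟩ := List.getLast?_eq_some_iff.1 hlast
    cases I with
    | nil => simp [invLetter_ne_self] at hhead
    | cons a M =>
      obtain rfl : a = p := by simpa using hhead
      rw [norm_conj_of_cancel_both hL, if_pos hhead, if_pos hlast]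
      simp only [List.cons_append, List.length_cons, List.length_append, List.length_nil]
      push_cast; ring
  · obtain ⟨T, rfl⟩ := List.head?_eq_some_iff.1 hhead
    have hT : ∀ q ∈ T.getLast?, q ≠ invLetter p := by
      rintro q hq rfl
      exact hlast (by simp_all [List.getLast?_cons])
    rw [norm_conj_of_cancel_left hL hT, if_pos hhead, if_neg hlast]
    simp
  · obtain ⟨I, rfl⟩ := List.getLast?_eq_some_iff.1 hlast
    have hI : ∀ q ∈ I.head?, q ≠ p := by
      rintro q hq rfl
      exact hhead (by simp_all [List.head?_append])
    rw [norm_conj_of_cancel_right hL hI, if_neg hhead, if_pos hlast]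
    simp
  · rw [norm_conj_of_no_cancel hL hL0 (fun q hq e => hhead (e ▸ hq :))
      (fun q hq e => hlast (e ▸ hq :)), if_neg hhead, if_neg hlast]
    simp

theorem sum_norm_conj_mk_singleton [Fintype α] {g : FreeGroup α} (hg : g ≠ 1) :
    ∑ p : α × Bool, (norm ((mk [p])⁻¹ * g * mk [p]) : ℤ) =
      2 * Fintype.card α * (norm g + 2) - 4 := by
  have hL : g.toWord ≠ [] := by rwa [ne_eq, toWord_eq_nil_iff]
  obtain ⟨a, ha⟩ := Option.ne_none_iff_exists'.1 (mt List.head?_eq_none_iff.1 hL)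
  obtain ⟨b, hb⟩ := Option.ne_none_iff_exists'.1 (mt List.getLast?_eq_none_iff.1 hL)
  have hlast (p : α × Bool) : some b = some (invLetter p) ↔ p = invLetter b := by
    rw [Option.some.injEq]
    exact ⟨fun h => by rw [h, invLetter_invLetter], fun h => by rw [h, invLetter_invLetter]⟩
  simp only [norm_conj_mk_singleton _ hg, ha, hb, hlast, Option.some.injEq, eq_comm (a := a)]
  rw [Finset.sum_sub_distrib, Finset.sum_sub_distrib, Finset.sum_ite_eq', Finset.sum_ite_eq',
    Finset.sum_const, Finset.card_univ, Fintype.card_prod, Fintype.card_bool]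
  simp only [Int.nsmul_eq_mul, Finset.mem_univ, ↓reduceIte]
  push_cast; ring

lemma norm_prod_le_length {l : List (FreeGroup α)} (hl : ∀ x ∈ l, norm x ≤ 1) :
    norm l.prod ≤ l.length := by
  induction l with
  | nil => simp
  | cons x l ih =>
    rw [List.prod_cons, List.length_cons, add_comm l.length]
    exact (norm_mul_le _ _).trans (add_le_add (hl x List.mem_cons_self)
      (ih fun y hy => hl y (List.mem_cons_of_mem x hy)))

theorem wl_range_mk_singleton (g : FreeGroup α) :
    wl (Set.range fun p : α × Bool => mk [p]) g = norm g := by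
  have hword : g.norm ∈ {n | ∃ l : List (FreeGroup α),
      (∀ x ∈ l, x ∈ Set.range fun p : α × Bool => mk [p]) ∧ l.length = n ∧ l.prod = g} :=
    ⟨g.toWord.map fun p => mk [p], fun x hx => by
      obtain ⟨p, -, rfl⟩ := List.mem_map.1 hx
      exact ⟨p, rfl⟩, by simp [norm], by rw [prod_map_mk_singleton, mk_toWord]⟩
  refine le_antisymm (Nat.sInf_le hword) (le_csInf ⟨_, hword⟩ ?_)
  rintro _ ⟨l, hl, rfl, rfl⟩
  refine norm_prod_le_length fun x hx => ?_
  obtain ⟨p, rfl⟩ := hl x hx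
  exact (norm_mk_singleton p).le

end FreeGroup

lemma freeGens_eq_map (n : ℕ) :
    freeGens n = Finset.univ.map ⟨fun p => FreeGroup.mk [p], FreeGroup.mk_singleton_injective⟩ := by
  ext x
  simp [freeGens, FreeGroup.of, FreeGroup.inv_mk, FreeGroup.invRev, eq_comm, exists_or, or_comm]

theorem stmt7 (n : ℕ) (hn : 2 ≤ n) (w : FreeGroup (Fin n)) (hw : w ≠ 1) :
    Av (freeGens n) w =
        (wl ((freeGens n : Finset (FreeGroup (Fin n))) : Set (FreeGroup (Fin n))) w : ℝ)
          + 2 - 2 / n ∧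
      curv (freeGens n) w =
        (2 - 2 * n) /
          ((wl ((freeGens n : Finset (FreeGroup (Fin n))) : Set (FreeGroup (Fin n))) w : ℝ) * n) ∧
      curv (freeGens n) w < 0 := by
  have hwl (g : FreeGroup (Fin n)) : wl ((freeGens n : Finset _) : Set _) g = g.norm := by
    rw [freeGens_eq_map, Finset.coe_map, Finset.coe_univ, Set.image_univ]
    exact FreeGroup.wl_range_mk_singleton g
  have hm : (0 : ℝ) < w.norm := by exact_mod_cast Nat.pos_of_ne_zero (by simpa using hw)
  have hn' : (2 : ℝ) ≤ n := by exact_mod_cast hn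
  have hAv : Av (freeGens n) w = w.norm + 2 - 2 / n := by
    have hsum : ∑ p : Fin n × Bool, (((FreeGroup.mk [p])⁻¹ * w * FreeGroup.mk [p]).norm : ℝ) =
        2 * n * (w.norm + 2) - 4 := by
      exact_mod_cast Fintype.card_fin n ▸ FreeGroup.sum_norm_conj_mk_singleton hw
    simp only [Av, hwl]
    rw [freeGens_eq_map, Finset.sum_map, Finset.card_map, Finset.card_univ, Fintype.card_prod,
      Fintype.card_fin, Fintype.card_bool, Function.Embedding.coeFn_mk, hsum]
    push_cast
    field_simp
    ring
  have hcurv : curv (freeGens n) w = (2 - 2 * n) / (w.norm * n) := by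
    rw [curv, hAv, hwl]
    field_simp
    ring
  refine ⟨by rw [hAv, hwl], by rw [hcurv, hwl], ?_⟩
  rw [hcurv]
  exact div_neg_of_neg_of_pos (by linarith) (by positivity)
end

section
/- In a right-angled Artin group A_Γ with standard generating set S = V(Γ)^±, for every element g and generator t ∈ S: |t⁻¹gt| + |tgt⁻¹| ≥ 2|g|. -/
open Filter Topology

open scoped commutatorElement

/-- Commutator relators of a right-angled Artin group on the graph `Γ`. -/
def raagRels {V : Type*} (Γ : SimpleGraph V) : Set (FreeGroup V) :=
  {w | ∃ u v : V, Γ.Adj u v ∧ w = ⁅FreeGroup.of u, FreeGroup.of v⁆}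

/-- The right-angled Artin group on the graph `Γ`. -/
abbrev RAAG {V : Type*} (Γ : SimpleGraph V) : Type _ :=
  PresentedGroup (raagRels Γ)

/-- The standard symmetric generating set `V(Γ)^±` of the RAAG. -/
noncomputable def raagS {V : Type*} [Fintype V] (Γ : SimpleGraph V) :
    Finset (RAAG Γ) := by
  classical
  exact Finset.univ.image (fun v : V => (PresentedGroup.of v : RAAG Γ)) ∪
    Finset.univ.image (fun v : V => (PresentedGroup.of v : RAAG Γ)⁻¹)

/-!
Write elements of `A_Γ` as words in the letters `V × Bool`. A letter `x` acts on words by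
cancelling against the first `x⁻¹` that can be moved to the front through letters commuting with
`x`, and by being prepended otherwise. On reduced words taken up to swaps of adjacent commuting
letters this is an action of `A_Γ`, in which the element represented by a reduced word `w` sends
the empty word to the class of `w`; hence reduced words representing the same element have the
same length, i.e. they are geodesic.

By the triangle inequality and parity, `|t⁻¹ g t|` is `|g| - 2`, `|g|` or `|g| + 2`. In the
first case `g = t u t⁻¹` with `u` geodesic, and `t t u t⁻¹ t⁻¹` is still reduced, so
`|t g t⁻¹| = |g| + 2`.
-/

namespace RAAG

open Relation

variable {V : Type*} {Γ : SimpleGraph V}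

abbrev Letter (V : Type*) := V × Bool

def Letter.inv (x : Letter V) : Letter V := (x.1, !x.2)

@[simp] lemma Letter.inv_inv (x : Letter V) : x.inv.inv = x := by simp [Letter.inv]

@[simp] lemma Letter.fst_inv (x : Letter V) : x.inv.1 = x.1 := rfl

lemma Letter.inv_ne_self (x : Letter V) : x.inv ≠ x := by simp [Letter.inv, Prod.ext_iff]

variable (Γ) in
def ofWord (w : List (Letter V)) : RAAG Γ := PresentedGroup.mk _ (FreeGroup.mk w)

lemma ofWord_append (w w' : List (Letter V)) :
    ofWord Γ (w ++ w') = ofWord Γ w * ofWord Γ w' := by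
  rw [ofWord, ← FreeGroup.mul_mk, map_mul]
  rfl

lemma ofWord_cons (x : Letter V) (w : List (Letter V)) :
    ofWord Γ (x :: w) = ofWord Γ [x] * ofWord Γ w :=
  ofWord_append [x] w

@[simp] lemma ofWord_inv_singleton (x : Letter V) : ofWord Γ [x.inv] = (ofWord Γ [x])⁻¹ := by
  rw [ofWord, ofWord, ← map_inv, FreeGroup.inv_mk]
  rfl

lemma ofWord_conj (x : Letter V) (w : List (Letter V)) :
    ofWord Γ (x :: w ++ [x.inv]) = ofWord Γ [x] * ofWord Γ w * (ofWord Γ [x])⁻¹ := by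
  rw [List.cons_append, ofWord_cons x, ofWord_append, ofWord_inv_singleton, mul_assoc]

lemma ofWord_singleton (x : Letter V) :
    ofWord Γ [x] = bif x.2 then PresentedGroup.of x.1 else (PresentedGroup.of x.1)⁻¹ := by
  obtain ⟨v, _ | _⟩ := x
  · exact ofWord_inv_singleton (v, true)
  · rfl

lemma ofWord_surjective : Function.Surjective (ofWord (V := V) Γ) := by
  intro g
  obtain ⟨z, rfl⟩ := PresentedGroup.mk_surjective _ g
  obtain ⟨w, rfl⟩ := Quot.exists_rep z
  exact ⟨w, rfl⟩

lemma prod_map_ofWord_singleton (w : List (Letter V)) :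
    (w.map fun x ↦ ofWord Γ [x]).prod = ofWord Γ w := by
  induction w with
  | nil => rfl
  | cons x w ih => rw [List.map_cons, List.prod_cons, ih, ← ofWord_cons]

lemma map_ofWord {G : Type*} [Group G] (φ : RAAG Γ →* G) (w : List (Letter V)) :
    φ (ofWord Γ w) = (w.map fun x ↦ bif x.2 then φ (.of x.1) else (φ (.of x.1))⁻¹).prod := by
  induction w with
  | nil => exact map_one φ
  | cons x w ih =>
    rw [ofWord_cons, map_mul, ih, ofWord_singleton]
    obtain ⟨v, _ | _⟩ := x <;> simp

lemma commute_ofWord_of_adj {x y : Letter V} (h : Γ.Adj x.1 y.1) :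
    Commute (ofWord Γ [x]) (ofWord Γ [y]) := by
  have hvert : Commute (PresentedGroup.of (rels := raagRels Γ) x.1) (.of y.1) := by
    rw [← commutatorElement_eq_one_iff_commute, PresentedGroup.of, PresentedGroup.of,
      ← map_commutatorElement]
    exact PresentedGroup.one_of_mem ⟨x.1, y.1, h, rfl⟩
  rw [ofWord_singleton, ofWord_singleton]
  cases x.2 <;> cases y.2 <;> simp [hvert, hvert.inv_left, hvert.inv_right, hvert.inv_inv]

variable (Γ) in
/-- `Cancels Γ x w w'` says that `w = b ++ x.inv :: c` with every letter of `b` commuting with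
`x`, and `w' = b ++ c`: the letter `x` cancels against the first `x.inv` of `w`. -/
inductive Cancels (x : Letter V) : List (Letter V) → List (Letter V) → Prop
  | head (w : List (Letter V)) : Cancels x (x.inv :: w) w
  | cons {y : Letter V} {w w' : List (Letter V)} (h : Γ.Adj y.1 x.1) (hc : Cancels x w w') :
      Cancels x (y :: w) (y :: w')

variable (Γ) in
inductive Reducible : List (Letter V) → Prop
  | head {x : Letter V} {w w' : List (Letter V)} (h : Cancels Γ x w w') : Reducible (x :: w)
  | cons {y : Letter V} {w : List (Letter V)} (h : Reducible w) : Reducible (y :: w)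

lemma not_cancels_nil {x : Letter V} {w' : List (Letter V)} : ¬ Cancels Γ x [] w' :=
  nofun

lemma not_reducible_nil : ¬ Reducible Γ ([] : List (Letter V)) :=
  nofun

lemma cancels_cons_iff {x y : Letter V} {w w' : List (Letter V)} :
    Cancels Γ x (y :: w) w' ↔
      (y = x.inv ∧ w' = w) ∨ (Γ.Adj y.1 x.1 ∧ ∃ w₀, Cancels Γ x w w₀ ∧ w' = y :: w₀) := by
  constructor
  · rintro (_ | ⟨h, hc⟩)
    · exact .inl ⟨rfl, rfl⟩
    · exact .inr ⟨h, _, hc, rfl⟩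
  · rintro (⟨rfl, rfl⟩ | ⟨h, w₀, hc, rfl⟩)
    · exact .head _
    · exact .cons h hc

lemma not_cancels_cons_self {x : Letter V} {w w' : List (Letter V)} :
    ¬ Cancels Γ x (x :: w) w' := by
  rw [cancels_cons_iff]
  rintro (⟨h, -⟩ | ⟨h, -⟩)
  · exact x.inv_ne_self h.symm
  · exact Γ.irrefl h

namespace Cancels

variable {x : Letter V} {w w' : List (Letter V)}

lemma unique {w₁ w₂ : List (Letter V)} (h₁ : Cancels Γ x w w₁) (h₂ : Cancels Γ x w w₂) :
    w₁ = w₂ := by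
  induction h₁ generalizing w₂ with
  | head => cases h₂ with
    | head => rfl
    | cons h => exact absurd h (by simp)
  | cons h _ ih => cases h₂ with
    | head => exact absurd h (by simp)
    | cons _ hc => rw [ih hc]

lemma length_eq (h : Cancels Γ x w w') : w.length = w'.length + 1 := by
  induction h <;> simp [*]

lemma ofWord_cons_eq (h : Cancels Γ x w w') : ofWord Γ (x :: w) = ofWord Γ w' := by
  induction h with
  | head w => rw [ofWord_cons x, ofWord_cons x.inv, ofWord_inv_singleton, mul_inv_cancel_left]
  | @cons y w w' hy _ ih =>
    rw [ofWord_cons x, ofWord_cons y, ← mul_assoc, (commute_ofWord_of_adj hy).symm.eq, mul_assoc,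
      ← ofWord_cons x, ih, ← ofWord_cons]

lemma exists_cancels_of_adj {y : Letter V} {t : List (Letter V)} (hxy : Γ.Adj x.1 y.1)
    (hx : Cancels Γ x w w') (hy : Cancels Γ y w' t) : ∃ t', Cancels Γ y w t' := by
  induction hx generalizing t with
  | head w => exact ⟨x.inv :: t, .cons (by simpa using hxy) hy⟩
  | @cons z w₀ w₀' hz _ ih =>
    rcases cancels_cons_iff.mp hy with ⟨rfl, rfl⟩ | ⟨hzy, t₀, hy₀, rfl⟩
    · exact ⟨w₀, .head w₀⟩
    · obtain ⟨t', ht'⟩ := ih hy₀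
      exact ⟨z :: t', .cons hzy ht'⟩

lemma reducible_of_cancels_inv {t : List (Letter V)} (hx : Cancels Γ x w w')
    (hinv : Cancels Γ x.inv w' t) : Reducible Γ w := by
  induction hx generalizing t with
  | head w => exact .head hinv
  | @cons z w₀ w₀' hz _ ih =>
    rcases cancels_cons_iff.mp hinv with ⟨rfl, rfl⟩ | ⟨-, t₀, hinv₀, rfl⟩
    · exact absurd hz (by simp)
    · exact .cons (ih hinv₀)

lemma exists_common {y : Letter V} {wy : List (Letter V)} (hne : x.1 ≠ y.1)
    (hx : Cancels Γ x w w') (hy : Cancels Γ y w wy) :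
    ∃ t, Cancels Γ y w' t ∧ Cancels Γ x wy t := by
  induction hx generalizing wy with
  | head w =>
    rcases cancels_cons_iff.mp hy with ⟨h, rfl⟩ | ⟨-, t₀, hy₀, rfl⟩
    · exact absurd (congrArg Prod.fst h) (by simpa using hne)
    · exact ⟨t₀, hy₀, .head t₀⟩
  | @cons z w₀ w₀' hz hx₀ ih =>
    rcases cancels_cons_iff.mp hy with ⟨rfl, rfl⟩ | ⟨hzy, t₀, hy₀, rfl⟩
    · exact ⟨w₀', .head w₀', hx₀⟩
    · obtain ⟨t, h₁, h₂⟩ := ih hy₀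
      exact ⟨z :: t, .cons hzy h₁, .cons hz h₂⟩

lemma reducible_of_reducible (h : Cancels Γ x w w') (hr : Reducible Γ w') : Reducible Γ w := by
  induction h with
  | head w => exact .cons hr
  | @cons z w₀ w₀' hz hc ih =>
    cases hr with
    | head h₂ =>
      obtain ⟨t, ht⟩ := exists_cancels_of_adj hz.symm hc h₂
      exact .head ht
    | cons h₂ => exact .cons (ih h₂)

end Cancels

lemma Reducible.exists_shorter {w : List (Letter V)} (h : Reducible Γ w) :
    ∃ w', ofWord Γ w' = ofWord Γ w ∧ w'.length + 2 = w.length := by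
  induction h with
  | @head x w w' h => exact ⟨w', h.ofWord_cons_eq.symm, by simp [h.length_eq]⟩
  | @cons y w _ ih =>
    obtain ⟨w', h₁, h₂⟩ := ih
    exact ⟨y :: w', by rw [ofWord_cons, h₁, ← ofWord_cons], by simp [← h₂]⟩

lemma not_reducible_cons {x : Letter V} {w : List (Letter V)} (hw : ¬ Reducible Γ w)
    (hx : ∀ w', ¬ Cancels Γ x w w') : ¬ Reducible Γ (x :: w) := by
  rintro (⟨h⟩ | ⟨h⟩)
  · exact hx _ h
  · exact hw h

variable (Γ) in
inductive Swap : List (Letter V) → List (Letter V) → Prop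
  | swap {x y : Letter V} (h : Γ.Adj x.1 y.1) (w : List (Letter V)) :
      Swap (x :: y :: w) (y :: x :: w)
  | cons (z : Letter V) {w w' : List (Letter V)} (h : Swap w w') : Swap (z :: w) (z :: w')

lemma Swap.symm {w w' : List (Letter V)} (h : Swap Γ w w') : Swap Γ w' w := by
  induction h with
  | swap h w => exact .swap h.symm w
  | cons z _ ih => exact .cons z ih

lemma length_eq_of_eqvGen_swap {w w' : List (Letter V)} (h : EqvGen (Swap Γ) w w') :
    w.length = w'.length := by
  induction h with
  | rel _ _ h => induction h <;> simp [*]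
  | refl => rfl
  | symm _ _ _ ih => exact ih.symm
  | trans _ _ _ _ _ ih₁ ih₂ => exact ih₁.trans ih₂

lemma eqvGen_swap_cons (z : Letter V) {w w' : List (Letter V)} (h : EqvGen (Swap Γ) w w') :
    EqvGen (Swap Γ) (z :: w) (z :: w') := by
  induction h with
  | rel _ _ h => exact .rel _ _ (.cons z h)
  | refl => exact .refl _
  | symm _ _ _ ih => exact .symm _ _ ih
  | trans _ _ _ _ _ ih₁ ih₂ => exact .trans _ _ _ ih₁ ih₂

lemma Cancels.eqvGen_swap {x : Letter V} {w w' : List (Letter V)} (h : Cancels Γ x w w') :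
    EqvGen (Swap Γ) w (x.inv :: w') := by
  induction h with
  | head w => exact .refl _
  | @cons z w₀ w₀' hz _ ih =>
    exact .trans _ _ _ (eqvGen_swap_cons z ih) (.rel _ _ (.swap (by simpa using hz) w₀'))

lemma Cancels.exists_of_swap {x : Letter V} {w w₁ w' : List (Letter V)}
    (hc : Cancels Γ x w w₁) (hs : Swap Γ w w') :
    ∃ w₁', Cancels Γ x w' w₁' ∧ EqvGen (Swap Γ) w₁ w₁' := by
  induction hs generalizing w₁ with
  | @swap s t hst w =>
    rcases cancels_cons_iff.mp hc with ⟨rfl, rfl⟩ | ⟨hs, w₀, hc₀, rfl⟩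
    · exact ⟨t :: w, .cons (by simpa using hst.symm) (.head w), .refl _⟩
    rcases cancels_cons_iff.mp hc₀ with ⟨rfl, rfl⟩ | ⟨ht, w₂, hc₂, rfl⟩
    · exact ⟨_, .head _, .refl _⟩
    · exact ⟨t :: s :: w₂, .cons ht (.cons hs hc₂), .rel _ _ (.swap hst w₂)⟩
  | @cons z w w' hs ih =>
    rcases cancels_cons_iff.mp hc with ⟨rfl, rfl⟩ | ⟨hz, w₀, hc₀, rfl⟩
    · exact ⟨w', .head w', .rel _ _ hs⟩
    · obtain ⟨w₁', hc', hw⟩ := ih hc₀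
      exact ⟨z :: w₁', .cons hz hc', eqvGen_swap_cons z hw⟩

section Action

open scoped Classical in
variable (Γ) in
noncomputable def act (x : Letter V) (w : List (Letter V)) : List (Letter V) :=
  if h : ∃ w', Cancels Γ x w w' then h.choose else x :: w

variable {x : Letter V} {w w' : List (Letter V)}

lemma act_of_cancels (h : Cancels Γ x w w') : act Γ x w = w' := by
  have hex : ∃ w', Cancels Γ x w w' := ⟨w', h⟩
  rw [act, dif_pos hex]
  exact hex.choose_spec.unique h

lemma act_of_not_cancels (h : ∀ w', ¬ Cancels Γ x w w') : act Γ x w = x :: w := by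
  rw [act, dif_neg (not_exists.mpr h)]

lemma eqvGen_swap_act_of_swap (h : Swap Γ w w') : EqvGen (Swap Γ) (act Γ x w) (act Γ x w') := by
  by_cases hc : ∃ w₁, Cancels Γ x w w₁
  · obtain ⟨w₁, hc⟩ := hc
    obtain ⟨w₁', hc', hw⟩ := hc.exists_of_swap h
    rwa [act_of_cancels hc, act_of_cancels hc']
  · have hc' : ∀ w₁', ¬ Cancels Γ x w' w₁' := fun w₁' hc' ↦
      hc ((hc'.exists_of_swap h.symm).imp fun _ ↦ And.left)
    rw [act_of_not_cancels (not_exists.mp hc), act_of_not_cancels hc']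
    exact eqvGen_swap_cons x (.rel _ _ h)

lemma eqvGen_swap_act (h : EqvGen (Swap Γ) w w') : EqvGen (Swap Γ) (act Γ x w) (act Γ x w') := by
  induction h with
  | rel _ _ h => exact eqvGen_swap_act_of_swap h
  | refl => exact .refl _
  | symm _ _ _ ih => exact .symm _ _ ih
  | trans _ _ _ _ _ ih₁ ih₂ => exact .trans _ _ _ ih₁ ih₂

lemma not_reducible_act (hw : ¬ Reducible Γ w) : ¬ Reducible Γ (act Γ x w) := by
  by_cases hc : ∃ w', Cancels Γ x w w'
  · obtain ⟨w', hc⟩ := hc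
    rw [act_of_cancels hc]
    exact fun hr ↦ hw (hc.reducible_of_reducible hr)
  · rw [act_of_not_cancels (not_exists.mp hc)]
    exact not_reducible_cons hw (not_exists.mp hc)

lemma eqvGen_swap_act_inv_act (hw : ¬ Reducible Γ w) :
    EqvGen (Swap Γ) (act Γ x.inv (act Γ x w)) w := by
  by_cases hc : ∃ w', Cancels Γ x w w'
  · obtain ⟨w', hc⟩ := hc
    have hinv : ∀ t, ¬ Cancels Γ x.inv w' t := fun t ht ↦ hw (hc.reducible_of_cancels_inv ht)
    rw [act_of_cancels hc, act_of_not_cancels hinv]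
    exact .symm _ _ hc.eqvGen_swap
  · have hx : Cancels Γ x.inv (x :: w) w := by simpa using Cancels.head (Γ := Γ) (x := x.inv) w
    rw [act_of_not_cancels (not_exists.mp hc), act_of_cancels hx]
    exact .refl _

lemma act_act_of_cancels {y : Letter V} {wx : List (Letter V)} (hxy : Γ.Adj x.1 y.1)
    (hx : Cancels Γ x w wx) : act Γ x (act Γ y w) = act Γ y (act Γ x w) := by
  rw [act_of_cancels hx]
  by_cases hy : ∃ wy, Cancels Γ y w wy
  · obtain ⟨wy, hy⟩ := hy
    obtain ⟨t, h₁, h₂⟩ := hx.exists_common hxy.ne hy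
    rw [act_of_cancels hy, act_of_cancels h₁, act_of_cancels h₂]
  · have hy' : ∀ t, ¬ Cancels Γ y wx t := fun t ht ↦ hy (hx.exists_cancels_of_adj hxy ht)
    rw [act_of_not_cancels (not_exists.mp hy), act_of_not_cancels hy',
      act_of_cancels (.cons hxy.symm hx)]

lemma eqvGen_swap_act_act {y : Letter V} (hxy : Γ.Adj x.1 y.1) (w : List (Letter V)) :
    EqvGen (Swap Γ) (act Γ x (act Γ y w)) (act Γ y (act Γ x w)) := by
  by_cases hx : ∃ wx, Cancels Γ x w wx
  · rw [act_act_of_cancels hxy hx.choose_spec]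
    exact .refl _
  by_cases hy : ∃ wy, Cancels Γ y w wy
  · rw [act_act_of_cancels hxy.symm hy.choose_spec]
    exact .refl _
  have hxy' : ∀ t, ¬ Cancels Γ x (y :: w) t := by
    intro t ht
    rcases cancels_cons_iff.mp ht with ⟨h, -⟩ | ⟨-, t₀, ht₀, -⟩
    · simp [h] at hxy
    · exact hx ⟨t₀, ht₀⟩
  have hyx : ∀ t, ¬ Cancels Γ y (x :: w) t := by
    intro t ht
    rcases cancels_cons_iff.mp ht with ⟨h, -⟩ | ⟨-, t₀, ht₀, -⟩
    · simp [h] at hxy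
    · exact hy ⟨t₀, ht₀⟩
  rw [act_of_not_cancels (not_exists.mp hx), act_of_not_cancels (not_exists.mp hy),
    act_of_not_cancels hxy', act_of_not_cancels hyx]
  exact .rel _ _ (.swap hxy w)

end Action

variable (Γ) in
def NormalForm : Type _ :=
  Quotient ((EqvGen.setoid (Swap Γ)).comap
    (Subtype.val : {w : List (Letter V) // ¬ Reducible Γ w} → List (Letter V)))

def NormalForm.mk (w : List (Letter V)) (hw : ¬ Reducible Γ w) : NormalForm Γ :=
  Quotient.mk _ ⟨w, hw⟩

lemma NormalForm.mk_eq_mk {w w' : List (Letter V)} {hw : ¬ Reducible Γ w}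
    {hw' : ¬ Reducible Γ w'} : NormalForm.mk w hw = NormalForm.mk w' hw' ↔ EqvGen (Swap Γ) w w' :=
  Quotient.eq.trans (Setoid.comap_rel _ _ _ _)

noncomputable def NormalForm.act (x : Letter V) : NormalForm Γ → NormalForm Γ :=
  Quotient.map (fun w ↦ ⟨RAAG.act Γ x w.1, not_reducible_act w.2⟩)
    fun _ _ h ↦ eqvGen_swap_act h

lemma NormalForm.act_inv_act (x : Letter V) (ω : NormalForm Γ) :
    NormalForm.act x.inv (NormalForm.act x ω) = ω := by
  induction ω using Quotient.inductionOn with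
  | h w => exact NormalForm.mk_eq_mk.mpr (eqvGen_swap_act_inv_act w.2)

variable (Γ) in
noncomputable def letterPerm (x : Letter V) : Equiv.Perm (NormalForm Γ) where
  toFun := NormalForm.act x
  invFun := NormalForm.act x.inv
  left_inv := NormalForm.act_inv_act x
  right_inv ω := by simpa using NormalForm.act_inv_act x.inv ω

variable (Γ) in
noncomputable def toPerm : RAAG Γ →* Equiv.Perm (NormalForm Γ) :=
  PresentedGroup.toGroup (f := fun v ↦ letterPerm Γ (v, true)) <| by
    rintro _ ⟨u, v, huv, rfl⟩
    rw [map_commutatorElement, commutatorElement_eq_one_iff_commute]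
    ext ω : 1
    induction ω using Quotient.inductionOn with
    | h w => exact NormalForm.mk_eq_mk.mpr (eqvGen_swap_act_act (x := (u, true)) huv w.1)

lemma toPerm_ofWord_singleton (x : Letter V) : toPerm Γ (ofWord Γ [x]) = letterPerm Γ x := by
  rw [ofWord_singleton]
  obtain ⟨v, _ | _⟩ := x
  · simp only [cond_false, map_inv, toPerm, PresentedGroup.toGroup.of]
    rfl
  · exact PresentedGroup.toGroup.of _

lemma toPerm_ofWord {w : List (Letter V)} (hw : ¬ Reducible Γ w) :
    toPerm Γ (ofWord Γ w) (NormalForm.mk [] not_reducible_nil) = NormalForm.mk w hw := by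
  induction w with
  | nil => rfl
  | cons x w ih =>
    have hw' : ¬ Reducible Γ w := fun h ↦ hw (.cons h)
    have hx : ∀ w', ¬ Cancels Γ x w w' := fun _ h ↦ hw (.head h)
    rw [ofWord_cons, map_mul, Equiv.Perm.mul_apply, ih hw', toPerm_ofWord_singleton]
    exact congrArg _ (Subtype.ext (act_of_not_cancels hx))

lemma length_eq_of_ofWord_eq {w w' : List (Letter V)} (hw : ¬ Reducible Γ w)
    (hw' : ¬ Reducible Γ w') (h : ofWord Γ w = ofWord Γ w') : w.length = w'.length := by
  have := toPerm_ofWord hw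
  rw [h, toPerm_ofWord hw'] at this
  exact (length_eq_of_eqvGen_swap (NormalForm.mk_eq_mk.mp this)).symm

lemma cancels_append_singleton {x s : Letter V} {w t : List (Letter V)}
    (h : Cancels Γ x (w ++ [s]) t) :
    (∃ t', Cancels Γ x w t') ∨ (s = x.inv ∧ ∀ y ∈ w, Γ.Adj y.1 x.1) := by
  induction w generalizing t with
  | nil =>
    rcases cancels_cons_iff.mp h with ⟨rfl, -⟩ | ⟨-, t₀, ht₀, -⟩
    · exact .inr ⟨rfl, by simp⟩
    · exact absurd ht₀ not_cancels_nil
  | cons z w ih =>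
    rcases cancels_cons_iff.mp h with ⟨rfl, -⟩ | ⟨hz, t₀, ht₀, -⟩
    · exact .inl ⟨w, .head w⟩
    rcases ih ht₀ with ⟨t', ht'⟩ | ⟨rfl, hw⟩
    · exact .inl ⟨z :: t', .cons hz ht'⟩
    · exact .inr ⟨rfl, List.forall_mem_cons.mpr ⟨hz, hw⟩⟩

lemma Reducible.of_append_singleton {s : Letter V} {w : List (Letter V)}
    (h : Reducible Γ (w ++ [s])) :
    Reducible Γ w ∨ ∃ a w₁, w = a ++ s.inv :: w₁ ∧ ∀ y ∈ w₁, Γ.Adj y.1 s.1 := by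
  induction w with
  | nil => cases h with
    | head h => exact absurd h not_cancels_nil
    | cons h => exact absurd h not_reducible_nil
  | cons z w ih => cases h with
    | head h =>
      rcases cancels_append_singleton h with ⟨t', ht'⟩ | ⟨rfl, hw⟩
      · exact .inl (.head ht')
      · exact .inr ⟨[], w, by simp, by simpa using hw⟩
    | cons h =>
      rcases ih h with h | ⟨a, w₁, rfl, hw₁⟩
      · exact .inl (.cons h)
      · exact .inr ⟨z :: a, w₁, rfl, hw₁⟩

lemma not_reducible_cons_cons {x y : Letter V} {w : List (Letter V)}
    (hw : ¬ Reducible Γ (y :: w)) (hxy : x.1 = y.1) (hne : y ≠ x.inv) :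
    ¬ Reducible Γ (x :: y :: w) := by
  refine not_reducible_cons hw fun t ht ↦ ?_
  rcases cancels_cons_iff.mp ht with ⟨h, -⟩ | ⟨h, -⟩
  · exact hne h
  · exact Γ.irrefl (hxy ▸ h)

lemma not_reducible_append_pair {y s : Letter V} {w : List (Letter V)}
    (hw : ¬ Reducible Γ (w ++ [y])) (hys : y.1 = s.1) (hne : y ≠ s.inv) :
    ¬ Reducible Γ (w ++ [y, s]) := by
  intro h
  rw [show w ++ [y, s] = (w ++ [y]) ++ [s] by simp] at h
  rcases h.of_append_singleton with h | ⟨a, w₁, heq, hw₁⟩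
  · exact hw h
  rcases List.eq_nil_or_concat' w₁ with rfl | ⟨w₂, z, rfl⟩
  · exact hne (List.singleton_inj.mp (List.append_inj_right' heq rfl))
  · have hyz : [y] = [z] :=
      List.append_inj_right' (s₂ := a ++ s.inv :: w₂) (by rw [heq]; simp) rfl
    obtain rfl := List.singleton_inj.mp hyz
    exact Γ.irrefl (hys ▸ hw₁ y (by simp))

variable (Γ) in
noncomputable def parity : RAAG Γ →* Multiplicative (ZMod 2) :=
  PresentedGroup.toGroup (f := fun _ ↦ .ofAdd 1) <| by
    rintro _ ⟨u, v, -, rfl⟩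
    rw [map_commutatorElement, commutatorElement_eq_one_iff_commute]
    exact mul_comm _ _

lemma parity_ofWord (w : List (Letter V)) : parity Γ (ofWord Γ w) = .ofAdd (w.length : ZMod 2) := by
  rw [map_ofWord]
  induction w with
  | nil => rfl
  | cons x w ih =>
    rw [List.map_cons, List.prod_cons, ih, List.length_cons, Nat.cast_succ, ofAdd_add, mul_comm]
    cases x.2 <;> rfl

section WordLength

variable [Fintype V]

local notation "ℓ" => wl ((raagS Γ : Finset (RAAG Γ)) : Set (RAAG Γ))

lemma coe_raagS : (raagS Γ : Set (RAAG Γ)) = Set.range fun x : Letter V ↦ ofWord Γ [x] := by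
  classical
  ext s
  simp only [raagS, Finset.coe_union, Finset.coe_image, Finset.coe_univ, Set.image_univ,
    Set.mem_union, Set.mem_range, Prod.exists, Bool.exists_bool, ofWord_singleton, cond_false,
    cond_true, exists_or]
  exact or_comm

lemma map_ofWord_singleton_mem_raagS (w : List (Letter V)) :
    ∀ s ∈ w.map fun x ↦ ofWord Γ [x], s ∈ (raagS Γ : Set (RAAG Γ)) :=
  coe_raagS (Γ := Γ) ▸ (Set.range_list_map _).subset ⟨w, rfl⟩

lemma wl_ofWord_le (w : List (Letter V)) : ℓ (ofWord Γ w) ≤ w.length :=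
  Nat.sInf_le ⟨_, map_ofWord_singleton_mem_raagS w, List.length_map _,
    prod_map_ofWord_singleton w⟩

lemma exists_ofWord_eq_and_length_eq_wl (g : RAAG Γ) :
    ∃ w : List (Letter V), ofWord Γ w = g ∧ w.length = ℓ g := by
  obtain ⟨w, rfl⟩ := ofWord_surjective (Γ := Γ) g
  have hne : {n | ∃ l : List (RAAG Γ), (∀ s ∈ l, s ∈ (raagS Γ : Set (RAAG Γ))) ∧
      l.length = n ∧ l.prod = ofWord Γ w}.Nonempty :=
    ⟨_, _, map_ofWord_singleton_mem_raagS w, List.length_map _, prod_map_ofWord_singleton w⟩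
  obtain ⟨l, hl, hlen, hprod⟩ := Nat.sInf_mem hne
  rw [coe_raagS] at hl
  obtain ⟨w', rfl⟩ : l ∈ Set.range (List.map _) := (Set.range_list_map _).superset hl
  exact ⟨w', by rwa [prod_map_ofWord_singleton] at hprod, by rw [← List.length_map, hlen, wl]⟩

lemma not_reducible_of_length_le_wl {w : List (Letter V)} (h : w.length ≤ ℓ (ofWord Γ w)) :
    ¬ Reducible Γ w := fun hr ↦ by
  obtain ⟨w', hw', hlen⟩ := hr.exists_shorter
  have := wl_ofWord_le (Γ := Γ) w'
  rw [hw'] at this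
  omega

lemma wl_ofWord_of_not_reducible {w : List (Letter V)} (hw : ¬ Reducible Γ w) :
    ℓ (ofWord Γ w) = w.length := by
  obtain ⟨w₀, hw₀, hlen⟩ := exists_ofWord_eq_and_length_eq_wl (ofWord Γ w)
  have hw₀red : ¬ Reducible Γ w₀ := not_reducible_of_length_le_wl (by rw [hw₀, hlen])
  rw [← hlen, length_eq_of_ofWord_eq hw₀red hw hw₀]

lemma wl_conj_mod_two (c g : RAAG Γ) : ℓ (c⁻¹ * g * c) % 2 = ℓ g % 2 := by
  obtain ⟨w, hw, hlen⟩ := exists_ofWord_eq_and_length_eq_wl (c⁻¹ * g * c)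
  obtain ⟨w', hw', hlen'⟩ := exists_ofWord_eq_and_length_eq_wl g
  have h : parity Γ (c⁻¹ * g * c) = parity Γ g := by
    rw [map_mul, map_mul, map_inv, mul_comm, mul_inv_cancel_left]
  rw [← hw, ← hw', parity_ofWord, parity_ofWord] at h
  rw [← hlen, ← hlen', ← ZMod.natCast_eq_natCast_iff']
  exact Multiplicative.ofAdd.injective h

lemma exists_ofWord_conj_eq (x : Letter V) (g : RAAG Γ) :
    ∃ u : List (Letter V), ofWord Γ (x :: u ++ [x.inv]) = g ∧
      u.length = ℓ ((ofWord Γ [x])⁻¹ * g * ofWord Γ [x]) := by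
  obtain ⟨u, hu, hlen⟩ := exists_ofWord_eq_and_length_eq_wl ((ofWord Γ [x])⁻¹ * g * ofWord Γ [x])
  exact ⟨u, by rw [ofWord_conj, hu]; group, hlen⟩

lemma wl_le_wl_conj_add_two (x : Letter V) (g : RAAG Γ) :
    ℓ g ≤ ℓ ((ofWord Γ [x])⁻¹ * g * ofWord Γ [x]) + 2 := by
  obtain ⟨u, hg, hlen⟩ := exists_ofWord_conj_eq x g
  have := wl_ofWord_le (Γ := Γ) (x :: u ++ [x.inv])
  simp only [hg, List.length_append, List.length_cons, List.length_nil] at this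
  omega

lemma wl_conj_inv_eq_add_two (x : Letter V) (g : RAAG Γ)
    (h : ℓ ((ofWord Γ [x])⁻¹ * g * ofWord Γ [x]) + 2 = ℓ g) :
    ℓ (ofWord Γ [x] * g * (ofWord Γ [x])⁻¹) = ℓ g + 2 := by
  obtain ⟨u, hg, hlen⟩ := exists_ofWord_conj_eq x g
  have hred : ¬ Reducible Γ (x :: u ++ [x.inv]) :=
    not_reducible_of_length_le_wl (by simp only [hg, ← h, ← hlen]; simp)
  have hred' : ¬ Reducible Γ (x :: x :: u ++ [x.inv, x.inv]) :=
    not_reducible_append_pair (not_reducible_cons_cons hred rfl x.inv_ne_self.symm) rfl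
      (by simpa using x.inv_ne_self)
  have hword : x :: x :: u ++ [x.inv, x.inv] = x :: (x :: u ++ [x.inv]) ++ [x.inv] := by simp
  rw [← hg, ← ofWord_conj, ← hword, wl_ofWord_of_not_reducible hred', hg, ← h, ← hlen]
  simp

lemma two_mul_wl_le_wl_conj_add_wl_conj (x : Letter V) (g : RAAG Γ) :
    2 * ℓ g ≤
      ℓ ((ofWord Γ [x])⁻¹ * g * ofWord Γ [x]) + ℓ (ofWord Γ [x] * g * (ofWord Γ [x])⁻¹) := by
  have hmod := wl_conj_mod_two (ofWord Γ [x]) g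
  have hmod' := wl_conj_mod_two (ofWord Γ [x])⁻¹ g
  have hle := wl_le_wl_conj_add_two x g
  have hle' := wl_le_wl_conj_add_two x.inv g
  have hlong := wl_conj_inv_eq_add_two x g
  have hlong' := wl_conj_inv_eq_add_two x.inv g
  simp only [inv_inv, ofWord_inv_singleton] at hmod' hle' hlong'
  omega

end WordLength

end RAAG

theorem stmt9 {V : Type*} [Fintype V] (Γ : SimpleGraph V) (g : RAAG Γ)
    (t : RAAG Γ) (ht : t ∈ raagS Γ) :
    2 * wl ((raagS Γ : Finset (RAAG Γ)) : Set (RAAG Γ)) g ≤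
      wl ((raagS Γ : Finset (RAAG Γ)) : Set (RAAG Γ)) (t⁻¹ * g * t) +
        wl ((raagS Γ : Finset (RAAG Γ)) : Set (RAAG Γ)) (t * g * t⁻¹) := by
  obtain ⟨x, rfl⟩ := Set.mem_range.mp (RAAG.coe_raagS (Γ := Γ) ▸ Finset.mem_coe.mpr ht)
  exact RAAG.two_mul_wl_le_wl_conj_add_wl_conj x g
end

section
/- The infinite dihedral group D_∞ = ⟨a, b | a², b²⟩ has no finite symmetric generating set S with respect to which κ(g) = 0 for every nontrivial g. Equivalently, there is no finite generating set of D_∞ that is invariant under conjugation by all of its own elements. -/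
/-!
If `κ ≡ 0`, then for a generator `t` (of length one) the conjugates `s⁻¹ t s`, `s ∈ S`, all have
length at least one and average length `Av(t) = 1`, so they are generators again. A symmetric set
closed under conjugation by its own elements is invariant under conjugation by the group it
generates. Mapping `D_∞` onto `DihedralGroup 0`, the image of `S` contains a reflection `sr i`,
whose conjugates `sr (i + 2 j)` are pairwise distinct; hence `S` is infinite.
-/

open Filter Topology

namespace Stmt15

/-- Relators of the infinite dihedral group `⟨a, b ∣ a², b²⟩`. -/
def relsD : Set (FreeGroup (Fin 2)) :=
  { (FreeGroup.of 0) ^ 2, (FreeGroup.of 1) ^ 2 }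

/-- The infinite dihedral group `D_∞ = ℤ/2 ∗ ℤ/2`. -/
abbrev Dinf : Type := PresentedGroup relsD

end Stmt15

section WordLength

variable {G : Type*} [Group G] {S : Set G} {g : G}

lemma exists_list_length_eq_wl (hg : g ∈ Submonoid.closure S) :
    ∃ l : List G, (∀ x ∈ l, x ∈ S) ∧ l.length = wl S g ∧ l.prod = g := by
  obtain ⟨l, hl, hprod⟩ := Submonoid.exists_list_of_mem_closure hg
  exact Nat.sInf_mem (s := {n | ∃ l : List G, (∀ x ∈ l, x ∈ S) ∧ l.length = n ∧ l.prod = g})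
    ⟨l.length, l, hl, rfl, hprod⟩

lemma wl_pos (hg : g ∈ Submonoid.closure S) (hg1 : g ≠ 1) : 0 < wl S g := by
  obtain ⟨l, -, hlen, hprod⟩ := exists_list_length_eq_wl hg
  rcases l with _ | ⟨x, l⟩
  · exact absurd hprod.symm hg1
  · simp [← hlen]

lemma wl_le_one (hg : g ∈ S) : wl S g ≤ 1 :=
  Nat.sInf_le ⟨[g], by simp [hg]⟩

lemma mem_of_wl_eq_one (hg : g ∈ Submonoid.closure S) (h : wl S g = 1) : g ∈ S := by
  obtain ⟨l, hl, hlen, hprod⟩ := exists_list_length_eq_wl hg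
  obtain ⟨x, rfl⟩ := List.length_eq_one_iff.1 (hlen.trans h)
  simpa [← hprod] using hl

end WordLength

section Curvature

variable {G : Type*} [Group G] {S : Finset G}

lemma conj_mem_of_curv_eq_zero (hS : Submonoid.closure (S : Set G) = ⊤) (h1 : (1 : G) ∉ S)
    {t : G} (ht : t ∈ S) (hκ : curv S t = 0) {s : G} (hs : s ∈ S) : s⁻¹ * t * s ∈ S := by
  have hgen : ∀ g : G, g ∈ Submonoid.closure (S : Set G) := fun g => hS ▸ Submonoid.mem_top g
  have hwl_t : wl (S : Set G) t = 1 :=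
    le_antisymm (wl_le_one ht) (wl_pos (hgen t) (ne_of_mem_of_not_mem ht h1))
  have hcard : (S.card : ℝ) ≠ 0 := by exact_mod_cast (Finset.card_pos.2 ⟨t, ht⟩).ne'
  have hAv : Av S t = 1 := by
    rw [curv, hwl_t] at hκ
    norm_num [sub_eq_zero] at hκ
    exact hκ.symm
  have hsum : ∑ a ∈ S, 1 = ∑ a ∈ S, wl (S : Set G) (a⁻¹ * t * a) := by
    rw [Av, div_eq_one_iff_eq hcard] at hAv
    have : S.card = ∑ a ∈ S, wl (S : Set G) (a⁻¹ * t * a) := by exact_mod_cast hAv.symm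
    simpa using this
  have hge : ∀ a ∈ S, 1 ≤ wl (S : Set G) (a⁻¹ * t * a) := fun a _ =>
    wl_pos (hgen _) <| by
      simpa using (conj_eq_one_iff (a := a⁻¹)).not.2 (ne_of_mem_of_not_mem ht h1)
  exact mem_of_wl_eq_one (hgen _) ((Finset.sum_eq_sum_iff_of_le hge).1 hsum s hs).symm

end Curvature

lemma conj_mem_of_closure_eq_top {G : Type*} [Group G] {T : Set G}
    (hT : Subgroup.closure T = ⊤) (hinv : ∀ s ∈ T, s⁻¹ ∈ T)
    (hconj : ∀ s ∈ T, ∀ t ∈ T, s⁻¹ * t * s ∈ T) (g : G) {t : G} (ht : t ∈ T) :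
    g⁻¹ * t * g ∈ T := by
  have hle : Subgroup.closure T ≤ Subgroup.normalizer T := by
    refine Subgroup.closure_le _ |>.2 fun s hs n => ⟨fun hn => ?_, fun hn => ?_⟩
    · simpa using hconj _ (hinv s hs) n hn
    · simpa [mul_assoc] using hconj s hs _ hn
  have := (hle (hT ▸ Subgroup.mem_top g⁻¹) t).1 ht
  rwa [inv_inv] at this

namespace DihedralGroup

variable {n : ℕ}

lemma r_one_zpow_cast (i : ZMod n) : (r 1 : DihedralGroup n) ^ (i.cast : ℤ) = r i := by
  rw [r_one_zpow, ZMod.intCast_zmod_cast]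

lemma r_inv_mul_sr_mul_r (i j : ZMod n) : (r j)⁻¹ * sr i * r j = sr (i + 2 * j) := by
  rw [inv_r, r_mul_sr, sr_mul_r]
  ring_nf

lemma closure_sr_zero_sr_one :
    Subgroup.closure {sr 0, sr 1} = (⊤ : Subgroup (DihedralGroup n)) := by
  set H := Subgroup.closure {(sr 0 : DihedralGroup n), sr 1}
  have hsr0 : sr 0 ∈ H := Subgroup.subset_closure (by simp)
  have hr : ∀ i, r i ∈ H := by
    have hr1 : r 1 ∈ H := by
      simpa [sr_mul_sr] using mul_mem hsr0 (Subgroup.subset_closure (by simp) : sr 1 ∈ H)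
    exact fun i => r_one_zpow_cast i ▸ zpow_mem hr1 _
  refine Subgroup.eq_top_iff' H |>.2 fun
    | r i => hr i
    | sr i => by simpa [sr_mul_r] using mul_mem hsr0 (hr i)

lemma exists_sr_mem_of_closure_eq_top {T : Set (DihedralGroup n)}
    (hT : Subgroup.closure T = ⊤) : ∃ i, sr i ∈ T := by
  by_contra! h
  have hle : Subgroup.closure T ≤ Subgroup.zpowers (r 1) := by
    refine Subgroup.closure_le _ |>.2 fun
      | r i, _ => ⟨i.cast, r_one_zpow_cast i⟩
      | sr i, hi => absurd hi (h i)
  obtain ⟨k, hk⟩ := hle (hT ▸ Subgroup.mem_top (sr 0))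
  simp at hk

lemma infinite_of_closure_eq_top_of_conj_mem {T : Set (DihedralGroup 0)}
    (hT : Subgroup.closure T = ⊤) (hconj : ∀ g, ∀ t ∈ T, g⁻¹ * t * g ∈ T) : T.Infinite := by
  obtain ⟨i, hi⟩ := exists_sr_mem_of_closure_eq_top hT
  have hmem : ∀ j : ZMod 0, sr (i + 2 * j) ∈ T := fun j => r_inv_mul_sr_mul_r i j ▸ hconj _ _ hi
  refine Set.infinite_of_injective_forall_mem (fun a b hab => ?_) hmem
  exact (mul_right_inj' two_ne_zero).1 (add_left_cancel (sr.inj hab))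

end DihedralGroup

namespace Stmt15

open DihedralGroup in
def toDihedralGroup : Dinf →* DihedralGroup 0 :=
  PresentedGroup.toGroup (f := ![sr 0, sr 1]) <| by
    rintro _ (rfl | rfl) <;> simp [sq]

lemma toDihedralGroup_surjective : Function.Surjective toDihedralGroup := by
  rw [← MonoidHom.range_eq_top, eq_top_iff, ← DihedralGroup.closure_sr_zero_sr_one,
    Subgroup.closure_le]
  rintro _ (rfl | rfl)
  · exact ⟨PresentedGroup.of 0, PresentedGroup.toGroup.of _⟩
  · exact ⟨PresentedGroup.of 1, PresentedGroup.toGroup.of _⟩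

theorem stmt15 :
    ¬ ∃ S : Finset Dinf,
        Subgroup.closure (S : Set Dinf) = ⊤ ∧
        (∀ a ∈ S, a⁻¹ ∈ S) ∧
        (1 : Dinf) ∉ S ∧
        (∀ g : Dinf, g ≠ 1 → curv S g = 0) := by
  rintro ⟨S, hgen, hsym, hone, hcurv⟩
  have hmon : Submonoid.closure (S : Set Dinf) = ⊤ := by
    have hinv : (S : Set Dinf)⁻¹ ⊆ S := fun x hx => by simpa using hsym _ hx
    rw [← Set.union_eq_left.2 hinv, ← Subgroup.closure_toSubmonoid, hgen]
    rfl
  have hconj : ∀ s ∈ S, ∀ t ∈ S, s⁻¹ * t * s ∈ S := fun s hs t ht =>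
    conj_mem_of_curv_eq_zero hmon hone ht (hcurv t (ne_of_mem_of_not_mem ht hone)) hs
  refine DihedralGroup.infinite_of_closure_eq_top_of_conj_mem (T := toDihedralGroup '' S)
    ?_ ?_ (S.finite_toSet.image _)
  · rw [← MonoidHom.map_closure, hgen, ← MonoidHom.range_eq_map,
      MonoidHom.range_eq_top.2 toDihedralGroup_surjective]
  · rintro g _ ⟨t, ht, rfl⟩
    obtain ⟨g, rfl⟩ := toDihedralGroup_surjective g
    exact ⟨g⁻¹ * t * g, conj_mem_of_closure_eq_top hgen hsym hconj g ht, by simp⟩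

end Stmt15
end

section
/- Let G be a group with finite symmetric generating set T, and let H = G ∗ F_n be the free product with the free group of rank n > |T|/2, generated by S = T ∪ U where U is the standard symmetric generating set of F_n. Then for every nontrivial g ∈ G: Av_H(g) = (|T|·Av_G(g) + 2n(|g|+2))/(|T| + 2n) > |g|, hence κ_H(g) < 0. Moreover the inclusion G → H is an isometry for the word metrics. -/
/-!
The projection `G ∗ K → G` kills the letters of `U` and sends those of `T` into `T`, so a word in
`T ∪ U` representing an element with image `g` contains at least `|g|_T` letters of `T`; this makes
`G → G ∗ K` an isometry. For a letter `u ≠ 1` of `U`, a word for `u⁻¹ g u` must in addition contain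
two letters of `U`: a product with at most one such letter has the form `a z b` with `a, b ∈ G`,
and the action of `G ∗ K` on `K × G` through the wreath product `G ≀ K` separates these elements
from `u⁻¹ g u`. So every conjugation of `g` by a free generator costs exactly `|g| + 2`, which gives
the formula for `Av`; with `Av_G(g) ≥ |g| - 2` and `|T| < 2n` it exceeds `|g|`.
-/

open Filter Topology

namespace Stmt18

open Monoid

section WordLength

variable {H : Type*} [Group H] {S : Set H}

lemma wl_prod_le_length {l : List H} (hl : ∀ x ∈ l, x ∈ S) : wl S l.prod ≤ l.length :=
  Nat.sInf_le ⟨l, hl, rfl, rfl⟩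

lemma exists_list_length_eq_wl {g : H} (hg : g ∈ Submonoid.closure S) :
    ∃ l : List H, (∀ x ∈ l, x ∈ S) ∧ l.length = wl S g ∧ l.prod = g := by
  obtain ⟨l, hl, rfl⟩ := Submonoid.exists_list_of_mem_closure hg
  exact Nat.sInf_mem
    (s := {n | ∃ l' : List H, (∀ x ∈ l', x ∈ S) ∧ l'.length = n ∧ l'.prod = l.prod})
    ⟨l.length, l, hl, rfl, rfl⟩

lemma wl_le_one_of_mem {s : H} (hs : s ∈ S) : wl S s ≤ 1 := by
  simpa using wl_prod_le_length (l := [s]) (by simpa using hs)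

lemma one_le_wl {g : H} (hg : g ∈ Submonoid.closure S) (hg1 : g ≠ 1) : 1 ≤ wl S g := by
  obtain ⟨l, -, hlen, rfl⟩ := exists_list_length_eq_wl hg
  rw [← hlen, Nat.one_le_iff_ne_zero]
  intro hl
  exact hg1 (by rw [List.length_eq_zero_iff.1 hl, List.prod_nil])

lemma wl_mul_le {g h : H} (hg : g ∈ Submonoid.closure S) (hh : h ∈ Submonoid.closure S) :
    wl S (g * h) ≤ wl S g + wl S h := by
  obtain ⟨l₁, hl₁, hlen₁, rfl⟩ := exists_list_length_eq_wl hg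
  obtain ⟨l₂, hl₂, hlen₂, rfl⟩ := exists_list_length_eq_wl hh
  rw [← hlen₁, ← hlen₂, ← List.length_append, ← List.prod_append]
  exact wl_prod_le_length (by simpa [or_imp, forall_and] using ⟨hl₁, hl₂⟩)

lemma wl_conj_le {g u : H} (hg : g ∈ Submonoid.closure S) (hu : u ∈ S) (hu' : u⁻¹ ∈ S) :
    wl S (u⁻¹ * g * u) ≤ wl S g + 2 := by
  have hmem : ∀ {x}, x ∈ S → x ∈ Submonoid.closure S := fun hx => Submonoid.subset_closure hx
  calc wl S (u⁻¹ * g * u) ≤ wl S u⁻¹ + wl S g + wl S u :=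
        (wl_mul_le (mul_mem (hmem hu') hg) (hmem hu)).trans
          (Nat.add_le_add_right (wl_mul_le (hmem hu') hg) _)
    _ ≤ wl S g + 2 := by linarith [wl_le_one_of_mem hu, wl_le_one_of_mem hu']

lemma wl_map_le {K : Type*} [Group K] {T : Set K} (φ : H →* K) (hφ : ∀ s ∈ S, φ s ∈ T)
    {g : H} (hg : g ∈ Submonoid.closure S) : wl T (φ g) ≤ wl S g := by
  obtain ⟨l, hl, hlen, rfl⟩ := exists_list_length_eq_wl hg
  rw [← hlen, map_list_prod, ← List.length_map φ]
  exact wl_prod_le_length (by simpa using fun s hs => hφ s (hl s hs))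

lemma wl_map_prod_le_countP {K : Type*} [Group K] [DecidableEq K] {T : Set K} (φ : H →* K)
    (hφ : ∀ s ∈ S, φ s ≠ 1 → φ s ∈ T) {l : List H} (hl : ∀ s ∈ l, s ∈ S) :
    wl T (φ l.prod) ≤ l.countP (fun s => φ s ≠ 1) := by
  have hmem : ∀ x ∈ (l.map φ).filter (· != 1), x ∈ T := by
    simp only [List.mem_filter, List.mem_map, bne_iff_ne]
    rintro _ ⟨⟨s, hs, rfl⟩, hs1⟩
    exact hφ s (hl s hs) hs1
  have := wl_prod_le_length hmem
  rw [List.prod_filter_bne_one, ← map_list_prod, List.filter_map, List.length_map,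
    ← List.countP_eq_length_filter] at this
  simpa [Function.comp_def, bne, beq_eq_decide] using this

lemma Submonoid.closure_eq_top_of_inv_mem (hsym : ∀ a ∈ S, a⁻¹ ∈ S)
    (hgen : Subgroup.closure S = ⊤) : Submonoid.closure S = ⊤ := by
  have hS : S ∪ S⁻¹ = S := Set.union_eq_left.2 fun a ha => by simpa using hsym _ ha
  rw [← hS, ← Subgroup.closure_toSubmonoid, hgen, Subgroup.top_toSubmonoid]

end WordLength

section AverageLength

variable {H : Type*} [Group H]

lemma card_mul_Av (S : Finset H) (g : H) :
    (S.card : ℝ) * Av S g = ∑ a ∈ S, (wl (S : Set H) (a⁻¹ * g * a) : ℝ) := by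
  rcases S.eq_empty_or_nonempty with rfl | hS
  · simp
  · rw [Av, mul_div_cancel₀ _ (Nat.cast_ne_zero.2 hS.card_ne_zero)]

lemma card_mul_sub_two_le_sum_wl_conj {T : Finset H} (hT : Submonoid.closure (T : Set H) = ⊤)
    (hsym : ∀ a ∈ T, a⁻¹ ∈ T) (g : H) :
    (T.card : ℝ) * (wl (T : Set H) g - 2) ≤ ∑ a ∈ T, (wl (T : Set H) (a⁻¹ * g * a) : ℝ) := by
  rw [← nsmul_eq_mul, ← Finset.sum_const]
  refine Finset.sum_le_sum fun a ha => ?_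
  have h := wl_conj_le (hT ▸ Submonoid.mem_top (a⁻¹ * g * a)) (hsym a ha) (by simpa using ha)
  rw [show a⁻¹⁻¹ * (a⁻¹ * g * a) * a⁻¹ = g by group] at h
  rw [sub_le_iff_le_add]
  exact_mod_cast h

lemma curv_neg {S : Finset H} {g : H} (hpos : 0 < wl (S : Set H) g)
    (hlt : (wl (S : Set H) g : ℝ) < Av S g) : curv S g < 0 :=
  div_neg_of_neg_of_pos (sub_neg.2 hlt) (Nat.cast_pos.2 hpos)

end AverageLength

section FreeProduct

open Coprod

variable {G K : Type*} [Group G] [Group K]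

/-- Together with `shiftPerm`, the standard action of the wreath product `G ≀ K` on `K × G`. -/
def fibreMulPerm [DecidableEq K] : G →* Equiv.Perm (K × G) where
  toFun g :=
    { toFun := fun p => (p.1, if p.1 = 1 then g * p.2 else p.2)
      invFun := fun p => (p.1, if p.1 = 1 then g⁻¹ * p.2 else p.2)
      left_inv := fun p => by by_cases h : p.1 = 1 <;> simp [h, Prod.ext_iff]
      right_inv := fun p => by by_cases h : p.1 = 1 <;> simp [h, Prod.ext_iff] }
  map_one' := by ext p <;> simp
  map_mul' g h := by ext p <;> by_cases hp : p.1 = 1 <;> simp [hp, mul_assoc]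

def shiftPerm : K →* Equiv.Perm (K × G) where
  toFun y :=
    { toFun := fun p => (y * p.1, p.2)
      invFun := fun p => (y⁻¹ * p.1, p.2)
      left_inv := fun p => by simp
      right_inv := fun p => by simp }
  map_one' := by ext p <;> simp
  map_mul' y z := by ext p <;> simp [mul_assoc]

lemma inr_inv_mul_inl_mul_inr_ne {g : G} {y : K} (hg : g ≠ 1) (hy : y ≠ 1) (a b : G) (z : K) :
    (inr y)⁻¹ * inl g * inr y ≠ inl a * inr z * inl b := by
  classical
  intro h
  -- At `(y⁻¹, 1)` the left side gives `(y⁻¹, g)`; the right side has first coordinate `z * y⁻¹`,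
  -- and gives `(y⁻¹, 1)` when `z = 1`.
  have := congrArg (fun x => lift fibreMulPerm shiftPerm x (y⁻¹, 1)) h
  simp [fibreMulPerm, shiftPerm, hy] at this
  obtain ⟨rfl, hga⟩ := this
  exact hg (by simpa [hy] using hga)

open Classical in
lemma exists_prod_eq_inl_mul_inr_mul_inl {l : List (G ∗ K)}
    (hl : ∀ s ∈ l, s ∈ (inl : G →* G ∗ K).range ∨ s ∈ (inr : K →* G ∗ K).range)
    (hcount : l.countP (· ∉ (inl : G →* G ∗ K).range) ≤ 1) :
    ∃ (a b : G) (z : K), l.prod = inl a * inr z * inl b := by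
  induction l with
  | nil => exact ⟨1, 1, 1, by simp⟩
  | cons s l ih =>
    have hl' : ∀ x ∈ l, _ := fun x hx => hl x (List.mem_cons_of_mem s hx)
    by_cases hs : s ∈ (inl : G →* G ∗ K).range
    · obtain ⟨t, rfl⟩ := hs
      obtain ⟨a, b, z, hprod⟩ := ih hl' (by simpa using hcount)
      exact ⟨t * a, b, z, by rw [List.prod_cons, hprod, map_mul]; group⟩
    · obtain ⟨z, rfl⟩ := (hl s List.mem_cons_self).resolve_left hs
      have hl_inl : ∀ x ∈ l, x ∈ (inl : G →* G ∗ K).range := by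
        rw [List.countP_cons, if_pos (decide_eq_true hs)] at hcount
        have h0 : l.countP (· ∉ (inl : G →* G ∗ K).range) = 0 := by omega
        simpa using List.countP_eq_zero.1 h0
      obtain ⟨b, hb⟩ := Subgroup.list_prod_mem _ hl_inl
      exact ⟨1, b, z, by rw [List.prod_cons, ← hb, map_one, one_mul]⟩

open Classical in
noncomputable def coprodGens (T : Finset G) (U : Finset K) : Finset (G ∗ K) :=
  T.image inl ∪ U.image inr

variable {T : Finset G} {U : Finset K}

lemma mem_coprodGens {s : G ∗ K} :
    s ∈ coprodGens T U ↔ (∃ t ∈ T, inl t = s) ∨ ∃ u ∈ U, inr u = s := by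
  simp [coprodGens]

lemma inl_mem_coprodGens {t : G} (ht : t ∈ T) : inl t ∈ coprodGens T U :=
  mem_coprodGens.2 (Or.inl ⟨t, ht, rfl⟩)

lemma inr_mem_coprodGens {u : K} (hu : u ∈ U) : inr u ∈ coprodGens T U :=
  mem_coprodGens.2 (Or.inr ⟨u, hu, rfl⟩)

lemma fst_mem_of_mem_coprodGens {s : G ∗ K} (hs : s ∈ coprodGens T U) (hs1 : fst s ≠ 1) :
    fst s ∈ T := by
  rcases mem_coprodGens.1 hs with ⟨t, ht, rfl⟩ | ⟨u, -, rfl⟩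
  · simpa using ht
  · simp at hs1

lemma fst_eq_one_of_mem_coprodGens {s : G ∗ K} (hs : s ∈ coprodGens T U)
    (hs' : s ∉ (inl : G →* G ∗ K).range) : fst s = 1 := by
  rcases mem_coprodGens.1 hs with ⟨t, -, rfl⟩ | ⟨u, -, rfl⟩
  exacts [absurd ⟨t, rfl⟩ hs', fst_apply_inr u]

lemma sum_coprodGens {M : Type*} [AddCommMonoid M] (hU : (1 : K) ∉ U) (f : G ∗ K → M) :
    ∑ s ∈ coprodGens T U, f s = ∑ t ∈ T, f (inl t) + ∑ u ∈ U, f (inr u) := by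
  classical
  rw [coprodGens, Finset.sum_union, Finset.sum_image inl_injective.injOn,
    Finset.sum_image inr_injective.injOn]
  simp only [Finset.disjoint_left, Finset.mem_image, not_exists, not_and]
  rintro _ ⟨t, -, rfl⟩ u hu h
  obtain rfl : u = 1 := by simpa using congrArg snd h
  exact hU hu

lemma card_coprodGens (hU : (1 : K) ∉ U) : (coprodGens T U).card = T.card + U.card := by
  rw [Finset.card_eq_sum_ones, sum_coprodGens hU, ← Finset.card_eq_sum_ones,
    ← Finset.card_eq_sum_ones]

lemma inl_mem_closure_coprodGens {g : G} (hg : g ∈ Submonoid.closure (T : Set G)) :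
    inl g ∈ Submonoid.closure (coprodGens T U : Set (G ∗ K)) := by
  have hmap : inl g ∈ Submonoid.closure ((inl : G →* G ∗ K) '' T) :=
    MonoidHom.map_mclosure (inl : G →* G ∗ K) (T : Set G) ▸ Submonoid.mem_map_of_mem _ hg
  refine Submonoid.closure_mono ?_ hmap
  rintro _ ⟨t, ht, rfl⟩
  exact inl_mem_coprodGens ht

lemma wl_coprodGens_inl {g : G} (hg : g ∈ Submonoid.closure (T : Set G)) :
    wl (coprodGens T U : Set (G ∗ K)) (inl g) = wl (T : Set G) g := by
  classical
  refine le_antisymm (wl_map_le (inl : G →* G ∗ K) (fun t ht => inl_mem_coprodGens ht) hg) ?_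
  obtain ⟨l, hl, hlen, hprod⟩ := exists_list_length_eq_wl (inl_mem_closure_coprodGens (U := U) hg)
  calc wl (T : Set G) g = wl (T : Set G) (fst l.prod) := by rw [hprod, fst_apply_inl]
    _ ≤ l.countP (fun s => fst s ≠ 1) :=
        wl_map_prod_le_countP _ (fun s hs => fst_mem_of_mem_coprodGens hs) hl
    _ ≤ l.length := List.countP_le_length
    _ = _ := hlen

open Classical in
lemma two_le_countP_notMem_range_inl {g : G} {u : K} (hg : g ≠ 1) (hu : u ≠ 1)
    {l : List (G ∗ K)} (hl : ∀ s ∈ l, s ∈ coprodGens T U)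
    (hprod : l.prod = (inr u)⁻¹ * inl g * inr u) :
    2 ≤ l.countP (· ∉ (inl : G →* G ∗ K).range) := by
  by_contra! hcount
  have hletters : ∀ s ∈ l, s ∈ (inl : G →* G ∗ K).range ∨
      s ∈ (inr : K →* G ∗ K).range := fun s hs => by
    rcases mem_coprodGens.1 (hl s hs) with ⟨t, -, rfl⟩ | ⟨u, -, rfl⟩
    exacts [Or.inl ⟨t, rfl⟩, Or.inr ⟨u, rfl⟩]
  obtain ⟨a, b, z, hab⟩ := exists_prod_eq_inl_mul_inr_mul_inl hletters (by omega)
  exact inr_inv_mul_inl_mul_inr_ne hg hu a b z (hprod ▸ hab)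

lemma wl_coprodGens_conj {g : G} {u : K} (hg : g ∈ Submonoid.closure (T : Set G)) (hg1 : g ≠ 1)
    (hu : u ∈ U) (hu' : u⁻¹ ∈ U) (hu1 : u ≠ 1) :
    wl (coprodGens T U : Set (G ∗ K)) ((inr u)⁻¹ * inl g * inr u) = wl (T : Set G) g + 2 := by
  classical
  have hu_inv : (inr u)⁻¹ ∈ (coprodGens T U : Set (G ∗ K)) := by
    rw [← map_inv]; exact inr_mem_coprodGens hu'
  refine le_antisymm ?_ ?_
  · rw [← wl_coprodGens_inl (U := U) hg]
    exact wl_conj_le (inl_mem_closure_coprodGens hg) (inr_mem_coprodGens hu) hu_inv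
  have hmem : (inr u)⁻¹ * inl g * inr u ∈ Submonoid.closure (coprodGens T U : Set (G ∗ K)) :=
    mul_mem (mul_mem (Submonoid.subset_closure hu_inv) (inl_mem_closure_coprodGens hg))
      (Submonoid.subset_closure (inr_mem_coprodGens hu))
  obtain ⟨l, hl, hlen, hprod⟩ := exists_list_length_eq_wl hmem
  have hG : wl (T : Set G) g ≤ l.countP (fun s => fst s ≠ 1) := by
    simpa [hprod] using wl_map_prod_le_countP fst (fun s hs => fst_mem_of_mem_coprodGens hs) hl
  have hK : 2 ≤ l.countP (fun s => ¬ fst s ≠ 1) :=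
    (two_le_countP_notMem_range_inl hg1 hu1 hl hprod).trans <| List.countP_mono_left fun s hs => by
      simpa using fst_eq_one_of_mem_coprodGens (hl s hs)
  rw [← hlen, List.length_eq_countP_add_countP (fun s => fst s ≠ 1)]
  simp only [decide_eq_true_eq]
  omega

lemma Av_coprodGens_inl (hT : Submonoid.closure (T : Set G) = ⊤) (hsymU : ∀ u ∈ U, u⁻¹ ∈ U)
    (hU : (1 : K) ∉ U) {g : G} (hg1 : g ≠ 1) :
    Av (coprodGens T U) (inl g) =
      (T.card * Av T g + U.card * (wl (T : Set G) g + 2)) / (T.card + U.card) := by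
  have hmem : ∀ x : G, x ∈ Submonoid.closure (T : Set G) := fun x => hT ▸ Submonoid.mem_top x
  have hconj : ∀ u ∈ U, (wl (coprodGens T U : Set (G ∗ K)) ((inr u)⁻¹ * inl g * inr u) : ℝ) =
      wl (T : Set G) g + 2 := fun u hu => by
    rw [wl_coprodGens_conj (hmem g) hg1 hu (hsymU u hu) (ne_of_mem_of_not_mem hu hU)]
    push_cast; rfl
  rw [Av, sum_coprodGens hU, card_coprodGens hU, Finset.sum_congr rfl hconj, card_mul_Av,
    Finset.sum_const, nsmul_eq_mul, Nat.cast_add]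
  congr 2
  refine Finset.sum_congr rfl fun t _ => ?_
  rw [← map_inv, ← map_mul, ← map_mul, wl_coprodGens_inl (hmem _)]

lemma wl_lt_Av_coprodGens_inl (hT : Submonoid.closure (T : Set G) = ⊤)
    (hsymT : ∀ t ∈ T, t⁻¹ ∈ T) (hsymU : ∀ u ∈ U, u⁻¹ ∈ U) (hU : (1 : K) ∉ U)
    (hcard : T.card < U.card) {g : G} (hg1 : g ≠ 1) :
    (wl (T : Set G) g : ℝ) < Av (coprodGens T U) (inl g) := by
  have hAv := card_mul_sub_two_le_sum_wl_conj hT hsymT g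
  rw [← card_mul_Av] at hAv
  have hcard' : (T.card : ℝ) < U.card := by exact_mod_cast hcard
  have hT0 : (0 : ℝ) ≤ T.card := Nat.cast_nonneg _
  rw [Av_coprodGens_inl hT hsymU hU hg1, lt_div_iff₀ (by linarith)]
  linarith

end FreeProduct

section FreeGroup

open FreeGroup

def freeGens (n : ℕ) : Finset (FreeGroup (Fin n)) :=
  Finset.univ.image of ∪ Finset.univ.image fun i => (of i)⁻¹

variable {n : ℕ}

lemma one_notMem_freeGens : (1 : FreeGroup (Fin n)) ∉ freeGens n := by
  simp [freeGens, of_ne_one]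

lemma inv_mem_freeGens {u : FreeGroup (Fin n)} (hu : u ∈ freeGens n) : u⁻¹ ∈ freeGens n := by
  simp only [freeGens, Finset.mem_union, Finset.mem_image, Finset.mem_univ, true_and] at hu ⊢
  rcases hu with ⟨i, rfl⟩ | ⟨i, rfl⟩
  exacts [Or.inr ⟨i, rfl⟩, Or.inl ⟨i, (inv_inv _).symm⟩]

lemma of_ne_inv_of {α : Type*} (a b : α) : of a ≠ (of b)⁻¹ := by
  classical
  intro h
  simpa [toWord_inv, invRev] using congrArg toWord h

lemma card_freeGens : (freeGens n).card = 2 * n := by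
  rw [freeGens, Finset.card_union_of_disjoint, Finset.card_image_of_injective _ of_injective,
    Finset.card_image_of_injective _ fun a b h => of_injective (inv_injective h)]
  · simp [two_mul]
  simp only [Finset.disjoint_left, Finset.mem_image, Finset.mem_univ, true_and]
  rintro _ ⟨a, rfl⟩ ⟨b, hb⟩
  exact of_ne_inv_of a b hb.symm

end FreeGroup

theorem stmt18_general {G : Type*} [Group G] (T : Finset G)
    (hgen : Subgroup.closure (T : Set G) = ⊤)
    (hsym : ∀ a ∈ T, a⁻¹ ∈ T)
    (n : ℕ) (hn : T.card < 2 * n)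
    (S : Finset (Coprod G (FreeGroup (Fin n))))
    (hS : (S : Set (Coprod G (FreeGroup (Fin n)))) =
        (fun g => Coprod.inl g) '' (T : Set G) ∪
          (fun i => Coprod.inr (FreeGroup.of i)) '' (Set.univ : Set (Fin n)) ∪
          (fun i => (Coprod.inr (FreeGroup.of i))⁻¹) '' (Set.univ : Set (Fin n))) :
    (∀ g : G, g ≠ 1 →
        Av S (Coprod.inl g) =
            ((T.card : ℝ) * Av T g + 2 * n * ((wl (T : Set G) g : ℝ) + 2)) /
              ((T.card : ℝ) + 2 * n) ∧
          (wl (T : Set G) g : ℝ) < Av S (Coprod.inl g) ∧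
          curv S (Coprod.inl g) < 0) ∧
      (∀ g : G,
        wl ((S : Finset (Coprod G (FreeGroup (Fin n)))) : Set (Coprod G (FreeGroup (Fin n))))
            (Coprod.inl g) = wl (T : Set G) g) := by
  have hT : Submonoid.closure (T : Set G) = ⊤ := Submonoid.closure_eq_top_of_inv_mem hsym hgen
  have hmem : ∀ g : G, g ∈ Submonoid.closure (T : Set G) := fun g => hT ▸ Submonoid.mem_top g
  obtain rfl : S = coprodGens T (freeGens n) := by
    apply Finset.coe_injective
    rw [hS]
    ext s
    simp [coprodGens, freeGens, or_and_right, exists_or, or_assoc]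
  have hcard : T.card < (freeGens n).card := by rwa [card_freeGens]
  have hlt := fun g (hg1 : g ≠ 1) =>
    wl_lt_Av_coprodGens_inl hT hsym (fun _ => inv_mem_freeGens) one_notMem_freeGens hcard hg1
  refine ⟨fun g hg1 => ⟨?_, hlt g hg1, ?_⟩, fun g => wl_coprodGens_inl (hmem g)⟩
  · rw [Av_coprodGens_inl hT (fun _ => inv_mem_freeGens) one_notMem_freeGens hg1, card_freeGens]
    push_cast
    ring
  · have hwl := wl_coprodGens_inl (U := freeGens n) (hmem g)
    refine curv_neg ?_ ?_ <;> rw [hwl]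
    exacts [one_le_wl (hmem g) hg1, hlt g hg1]

theorem stmt18 {G : Type*} [Group G] (T : Finset G)
    (hgen : Subgroup.closure (T : Set G) = ⊤)
    (hsym : ∀ a ∈ T, a⁻¹ ∈ T) (hid : (1 : G) ∉ T) (hne : T.Nonempty)
    (n : ℕ) (hn : T.card < 2 * n)
    (S : Finset (Coprod G (FreeGroup (Fin n))))
    (hS : (S : Set (Coprod G (FreeGroup (Fin n)))) =
        (fun g => Coprod.inl g) '' (T : Set G) ∪
          (fun i => Coprod.inr (FreeGroup.of i)) '' (Set.univ : Set (Fin n)) ∪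
          (fun i => (Coprod.inr (FreeGroup.of i))⁻¹) '' (Set.univ : Set (Fin n))) :
    (∀ g : G, g ≠ 1 →
        Av S (Coprod.inl g) =
            ((T.card : ℝ) * Av T g + 2 * n * ((wl (T : Set G) g : ℝ) + 2)) /
              ((T.card : ℝ) + 2 * n) ∧
          (wl (T : Set G) g : ℝ) < Av S (Coprod.inl g) ∧
          curv S (Coprod.inl g) < 0) ∧
      (∀ g : G,
        wl ((S : Finset (Coprod G (FreeGroup (Fin n)))) : Set (Coprod G (FreeGroup (Fin n))))
            (Coprod.inl g) = wl (T : Set G) g) :=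
  stmt18_general T hgen hsym n hn S hS

end Stmt18
end
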